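/- arXiv:0906.1397 — 3 statements merged into one kernel-verified Lean document; each statement's English description precedes it below -/
import Mathlib

section
/- Fix an integer l ≥ 3, a constant C > 0, and ε' > 0, and let p = C·n^{−1+1/(l−1)}. Then asymptotically almost surely the random graph G(n,p) has the following property: every subgraph G' ⊆ G(n,p) with minimum degree δ(G') ≥ ε'·np satisfies that for every subset X of the vertices of G' with |X| ≤ (1/80)·ε'·n, one has |N_{G'}(X) \ X| ≥ 2|X|. -/
open Filter Finset
open scoped Classical

noncomputable section

/-- Probability that the Erdős–Rényi random graph `G(n,p)` (on vertex set `Fin n`, each pair an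
edge independently with probability `p`) satisfies the property `A`. -/
def erProb (n : ℕ) (p : ℝ) (A : SimpleGraph (Fin n) → Prop) : ℝ :=
  ∑ G ∈ Finset.univ.filter fun G => A G,
    p ^ G.edgeSet.ncard * (1 - p) ^ (n.choose 2 - G.edgeSet.ncard)

/-- The neighborhood `N_G(X)` of a vertex set `X`: all vertices adjacent to some vertex of `X`. -/
def nbhd {V : Type*} (G : SimpleGraph V) (X : Set V) : Set V :=
  {v | ∃ x ∈ X, G.Adj x v}

/-- The degree of a vertex, as the cardinality of its neighborhood. -/
def deg {V : Type*} (G : SimpleGraph V) (v : V) : ℕ :=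
  (G.neighborSet v).ncard

/-- `G` contains a cycle of length `t`. -/
def hasCycleLength {V : Type*} (G : SimpleGraph V) (t : ℕ) : Prop :=
  ∃ (v : V) (w : G.Walk v v), w.IsCycle ∧ w.length = t

namespace ERAux

variable {n : ℕ} {p : ℝ}

/-- all potential edges -/
def pot (n : ℕ) : Finset (Sym2 (Fin n)) := Finset.univ.filter fun e => ¬ e.IsDiag

def wt (n : ℕ) (p : ℝ) (s : Finset (Sym2 (Fin n))) : ℝ :=
  p ^ s.card * (1 - p) ^ (n.choose 2 - s.card)

lemma pot_card : (pot n).card = n.choose 2 := by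
  rw [pot, ← Fintype.card_subtype, Sym2.card_subtype_not_diag, Fintype.card_fin]

lemma edgeFinset_subset_pot (G : SimpleGraph (Fin n)) : G.edgeFinset ⊆ pot n := by
  intro e he
  simp only [pot, mem_filter, mem_univ, true_and]
  exact G.not_isDiag_of_mem_edgeFinset he

lemma erProb_eq (A : SimpleGraph (Fin n) → Prop) :
    erProb n p A = ∑ s ∈ (pot n).powerset.filter (fun s : Finset (Sym2 (Fin n)) => A (SimpleGraph.fromEdgeSet ↑s)),
      wt n p s := by
  rw [erProb]
  refine Finset.sum_bij' (fun G _ => G.edgeFinset) (fun s _ => SimpleGraph.fromEdgeSet ↑s)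
    ?_ ?_ ?_ ?_ ?_
  · intro G hG
    simp only [mem_filter, mem_univ, true_and] at hG
    simp only [mem_filter, mem_powerset]
    refine ⟨edgeFinset_subset_pot G, ?_⟩
    rw [SimpleGraph.coe_edgeFinset, SimpleGraph.fromEdgeSet_edgeSet]
    exact hG
  · intro s hs
    simp only [mem_filter, mem_univ, true_and]
    simp only [mem_filter, mem_powerset] at hs
    exact hs.2
  · intro G hG
    show SimpleGraph.fromEdgeSet ↑G.edgeFinset = G
    rw [SimpleGraph.coe_edgeFinset, SimpleGraph.fromEdgeSet_edgeSet]
  · intro s hs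
    simp only [mem_filter, mem_powerset] at hs
    have hnd : ∀ e ∈ (s : Set (Sym2 (Fin n))), ¬ e.IsDiag := by
      intro e he
      have := hs.1 he
      simp only [pot, mem_filter] at this
      exact this.2
    ext e
    simp only [SimpleGraph.mem_edgeFinset, SimpleGraph.edgeSet_fromEdgeSet, Set.mem_diff,
      Set.mem_setOf_eq, Finset.mem_coe]
    exact ⟨fun h => h.1, fun h => ⟨h, hnd e h⟩⟩
  · intro G hG
    have h1 : G.edgeSet.ncard = G.edgeFinset.card := by
      rw [Set.ncard_eq_toFinset_card']
      congr 1
    show _ = wt n p G.edgeFinset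
    rw [wt, h1]

lemma sum_pow_powerset {α : Type*} (t : Finset α) (p : ℝ) :
    ∑ s ∈ t.powerset, p ^ s.card * (1 - p) ^ (t.card - s.card) = 1 := by
  classical
  have h := Finset.prod_add (fun _ : α => p) (fun _ => 1 - p) t
  simp only [add_sub_cancel, prod_const, one_pow] at h
  have h2 : ∑ s ∈ t.powerset, p ^ s.card * (1 - p) ^ (t.card - s.card)
      = ∑ s ∈ t.powerset, p ^ s.card * (1 - p) ^ ((t \ s).card) :=
    Finset.sum_congr rfl fun s hs => by rw [card_sdiff_of_subset (mem_powerset.1 hs)]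
  rw [h2]
  exact h.symm

lemma sum_wt_powerset : ∑ s ∈ (pot n).powerset, wt n p s = 1 := by
  have := sum_pow_powerset (pot n) p
  rw [pot_card] at this
  exact this

lemma erProb_add_compl (A : SimpleGraph (Fin n) → Prop) :
    erProb n p A + erProb n p (fun G => ¬ A G) = 1 := by
  rw [erProb_eq, erProb_eq, Finset.sum_filter_add_sum_filter_not, sum_wt_powerset]

lemma wt_nonneg (hp0 : 0 ≤ p) (hp1 : p ≤ 1) (s : Finset (Sym2 (Fin n))) : 0 ≤ wt n p s :=
  mul_nonneg (pow_nonneg hp0 _) (pow_nonneg (by linarith) _)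

lemma erProb_nonneg (hp0 : 0 ≤ p) (hp1 : p ≤ 1) (A : SimpleGraph (Fin n) → Prop) :
    0 ≤ erProb n p A := by
  rw [erProb_eq]
  exact Finset.sum_nonneg fun s _ => wt_nonneg hp0 hp1 s

lemma erProb_le_one (hp0 : 0 ≤ p) (hp1 : p ≤ 1) (A : SimpleGraph (Fin n) → Prop) :
    erProb n p A ≤ 1 := by
  have := erProb_add_compl (p := p) A
  have h2 := erProb_nonneg hp0 hp1 (fun G => ¬ A G)
  linarith

lemma erProb_mono (hp0 : 0 ≤ p) (hp1 : p ≤ 1) {A B : SimpleGraph (Fin n) → Prop}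
    (h : ∀ G, A G → B G) : erProb n p A ≤ erProb n p B := by
  rw [erProb_eq, erProb_eq]
  refine Finset.sum_le_sum_of_subset_of_nonneg ?_ fun s _ _ => wt_nonneg hp0 hp1 s
  intro s hs
  simp only [mem_filter] at *
  exact ⟨hs.1, h _ hs.2⟩

lemma sum_biUnion_le' {ι α : Type*} [DecidableEq α] (I : Finset ι) (t : ι → Finset α)
    (f : α → ℝ) (hf : ∀ x, 0 ≤ f x) :
    ∑ x ∈ I.biUnion t, f x ≤ ∑ i ∈ I, ∑ x ∈ t i, f x := by
  classical
  induction I using Finset.induction with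
  | empty => simp
  | insert _ _ hi ih =>
    rename_i a I'
    rw [Finset.biUnion_insert, Finset.sum_insert hi]
    have h1 : ∑ x ∈ t a ∪ I'.biUnion t, f x ≤ ∑ x ∈ t a, f x + ∑ x ∈ I'.biUnion t, f x := by
      rw [← Finset.sum_union_inter]
      exact le_add_of_nonneg_right (Finset.sum_nonneg fun x _ => hf x)
    linarith

lemma erProb_union_le (hp0 : 0 ≤ p) (hp1 : p ≤ 1) {ι : Type*} (I : Finset ι)
    (B : ι → SimpleGraph (Fin n) → Prop) :
    erProb n p (fun G => ∃ i ∈ I, B i G) ≤ ∑ i ∈ I, erProb n p (B i) := by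
  classical
  rw [erProb_eq]
  refine le_trans (Finset.sum_le_sum_of_subset_of_nonneg
    (t := I.biUnion fun i => (pot n).powerset.filter
      (fun s : Finset (Sym2 (Fin n)) => B i (SimpleGraph.fromEdgeSet ↑s)))
    ?_ fun s _ _ => wt_nonneg hp0 hp1 s) ?_
  · intro s hs
    simp only [mem_filter, mem_biUnion] at *
    obtain ⟨h1, i, hi, h2⟩ := hs
    exact ⟨i, hi, h1, h2⟩
  · refine le_trans (sum_biUnion_le' I _ _ (wt_nonneg hp0 hp1)) ?_
    refine Finset.sum_le_sum fun i _ => ?_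
    rw [erProb_eq]

lemma erProb_subset_edges_le (hp0 : 0 ≤ p) (hp1 : p ≤ 1) (F : Finset (Sym2 (Fin n)))
    (hF : F ⊆ pot n) :
    erProb n p (fun G => (F : Set (Sym2 (Fin n))) ⊆ G.edgeSet) ≤ p ^ F.card := by
  classical
  rw [erProb_eq]
  have step1 : ∑ s ∈ (pot n).powerset.filter
      (fun s : Finset (Sym2 (Fin n)) =>
        (F : Set (Sym2 (Fin n))) ⊆ (SimpleGraph.fromEdgeSet ↑s).edgeSet), wt n p s
      ≤ ∑ s ∈ (pot n).powerset.filter (fun s => F ⊆ s), wt n p s := by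
    refine Finset.sum_le_sum_of_subset_of_nonneg ?_ fun s _ _ => wt_nonneg hp0 hp1 s
    intro s hs
    simp only [mem_filter, mem_powerset] at *
    refine ⟨hs.1, ?_⟩
    intro e he
    have := hs.2 (Finset.mem_coe.2 he)
    rw [SimpleGraph.edgeSet_fromEdgeSet] at this
    exact Finset.mem_coe.1 this.1
  refine le_trans step1 (le_of_eq ?_)
  have step2 : ∑ s ∈ (pot n).powerset.filter (fun s => F ⊆ s), wt n p s
      = ∑ u ∈ ((pot n) \ F).powerset, wt n p (F ∪ u) := by
    refine Finset.sum_bij' (fun s _ => s \ F) (fun u _ => F ∪ u) ?_ ?_ ?_ ?_ ?_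
    · intro s hs
      simp only [mem_filter, mem_powerset] at hs
      simp only [mem_powerset]
      exact Finset.sdiff_subset_sdiff hs.1 (Finset.Subset.refl _)
    · intro u hu
      simp only [mem_powerset] at hu
      simp only [mem_filter, mem_powerset]
      constructor
      · exact Finset.union_subset hF (hu.trans Finset.sdiff_subset)
      · exact Finset.subset_union_left
    · intro s hs
      simp only [mem_filter, mem_powerset] at hs
      show F ∪ s \ F = s
      rw [Finset.union_sdiff_of_subset hs.2]
    · intro u hu
      simp only [mem_powerset] at hu
      show (F ∪ u) \ F = u
      rw [Finset.union_sdiff_cancel_left]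
      exact Finset.disjoint_left.2 fun e heF heu => (Finset.mem_sdiff.1 (hu heu)).2 heF
    · intro s hs
      simp only [mem_filter, mem_powerset] at hs
      show wt n p s = wt n p (F ∪ s \ F)
      rw [Finset.union_sdiff_of_subset hs.2]
  rw [step2]
  have hdF : ∀ u ∈ ((pot n) \ F).powerset, wt n p (F ∪ u)
      = p ^ F.card * (p ^ u.card * (1 - p) ^ (((pot n) \ F).card - u.card)) := by
    intro u hu
    simp only [mem_powerset] at hu
    have hdisj : Disjoint F u :=
      Finset.disjoint_left.2 fun e heF heu => (Finset.mem_sdiff.1 (hu heu)).2 heF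
    rw [wt, Finset.card_union_of_disjoint hdisj, pow_add, card_sdiff_of_subset hF, pot_card]
    rw [Nat.sub_sub]
    ring
  rw [Finset.sum_congr rfl hdF, ← Finset.mul_sum, sum_pow_powerset, mul_one]




def pairsIn {n : ℕ} (S : Finset (Fin n)) : Finset (Sym2 (Fin n)) :=
  ((S ×ˢ S).image (Function.uncurry Sym2.mk)).filter (fun e => ¬ e.IsDiag)

lemma pairsIn_subset_pot {S : Finset (Fin n)} : pairsIn S ⊆ pot n := by
  intro e he
  simp only [pairsIn, mem_filter] at he
  simp only [pot, mem_filter, mem_univ, true_and]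
  exact he.2

lemma pairsIn_card_le {S : Finset (Fin n)} : (pairsIn S).card ≤ S.card ^ 2 := by
  calc (pairsIn S).card ≤ ((S ×ˢ S).image (Function.uncurry Sym2.mk)).card := Finset.card_filter_le _ _
    _ ≤ (S ×ˢ S).card := Finset.card_image_le
    _ = S.card ^ 2 := by rw [Finset.card_product, sq]

lemma mem_pairsIn {S : Finset (Fin n)} {a b : Fin n} (ha : a ∈ S) (hb : b ∈ S)
    (hab : a ≠ b) : s(a, b) ∈ pairsIn S := by
  simp only [pairsIn, mem_filter, Finset.mem_image]
  refine ⟨⟨(a, b), Finset.mem_product.2 ⟨ha, hb⟩, rfl⟩, ?_⟩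
  simp [Sym2.isDiag_iff_proj_eq, hab]

/-- restricted handshake: many edges within `S`. -/
lemma edges_within (G' : SimpleGraph (Fin n)) (D : ℕ) (Xf S : Finset (Fin n))
    (hdeg : ∀ v ∈ Xf, D ≤ (G'.neighborFinset v).card)
    (hS : ∀ x ∈ Xf, ∀ y, G'.Adj x y → y ∈ S) (hXS : Xf ⊆ S) :
    Xf.card * D ≤ 2 * (G'.edgeFinset.filter (fun e => ∀ v ∈ e, v ∈ S)).card := by
  classical
  set H : SimpleGraph (Fin n) :=
    { Adj := fun u v => G'.Adj u v ∧ u ∈ S ∧ v ∈ S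
      symm := ⟨fun u v h => ⟨h.1.symm, h.2.2, h.2.1⟩⟩
      loopless := ⟨fun u h => G'.irrefl h.1⟩ } with hH
  have hEH : H.edgeFinset = G'.edgeFinset.filter (fun e => ∀ v ∈ e, v ∈ S) := by
    ext e
    induction e with
    | _ a b =>
      simp only [SimpleGraph.mem_edgeFinset, mem_filter, SimpleGraph.mem_edgeSet,
        Sym2.mem_iff, hH]
      constructor
      · rintro ⟨h1, h2, h3⟩
        exact ⟨h1, fun v hv => by rcases hv with rfl | rfl <;> assumption⟩
      · rintro ⟨h1, h2⟩
        exact ⟨h1, h2 a (Or.inl rfl), h2 b (Or.inr rfl)⟩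
  have hdegH : ∀ x ∈ Xf, D ≤ H.degree x := by
    intro x hx
    refine le_trans (hdeg x hx) (Finset.card_le_card ?_)
    intro y hy
    rw [SimpleGraph.mem_neighborFinset] at *
    exact ⟨hy, hXS hx, hS x hx y hy⟩
  calc Xf.card * D = ∑ _x ∈ Xf, D := by rw [Finset.sum_const, smul_eq_mul]
    _ ≤ ∑ x ∈ Xf, H.degree x := Finset.sum_le_sum hdegH
    _ ≤ ∑ x, H.degree x := Finset.sum_le_sum_of_subset (Finset.subset_univ Xf)
    _ = 2 * H.edgeFinset.card := SimpleGraph.sum_degrees_eq_twice_card_edges H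
    _ = _ := by rw [hEH]

lemma deg_eq_degree (G' : SimpleGraph (Fin n)) (v : Fin n) :
    deg G' v = G'.degree v := by
  rw [deg, Set.ncard_eq_toFinset_card']
  congr 1

/-- The deterministic reduction: a failure of expansion yields a small set spanning many edges. -/
lemma reduction (D : ℕ) (G G' : SimpleGraph (Fin n)) (hle : G' ≤ G)
    (hdeg : ∀ v, D ≤ deg G' v) (X : Set (Fin n))
    (hbad : (nbhd G' X \ X).ncard < 2 * X.ncard) :
    ∃ S : Finset (Fin n), 1 ≤ S.card ∧ S.card ≤ 3 * X.ncard ∧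
      ∃ F ∈ (pairsIn S).powersetCard (S.card * D / 6),
        (↑F : Set (Sym2 (Fin n))) ⊆ G.edgeSet := by
  classical
  set Xf := X.toFinset with hXf
  set Y := (nbhd G' X \ X).toFinset with hYdef
  have hX1 : X.ncard = Xf.card := Set.ncard_eq_toFinset_card' X
  have hY1 : (nbhd G' X \ X).ncard = Y.card := Set.ncard_eq_toFinset_card' _
  set S := Xf ∪ Y with hSdef
  have hXfS : Xf ⊆ S := Finset.subset_union_left
  rw [hX1, hY1] at hbad
  have hXpos : 1 ≤ Xf.card := by omega
  have hcu : S.card ≤ Xf.card + Y.card := Finset.card_union_le Xf Y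
  have hScard : S.card ≤ 3 * X.ncard := by rw [hX1]; omega
  have hSpos : 1 ≤ S.card := le_trans hXpos (Finset.card_le_card hXfS)
  -- apply edges_within
  have hdeg' : ∀ v ∈ Xf, D ≤ (G'.neighborFinset v).card := by
    intro v _
    have := hdeg v
    rwa [deg_eq_degree] at this
  have hS' : ∀ x ∈ Xf, ∀ y, G'.Adj x y → y ∈ S := by
    intro x hx y hxy
    rw [hXf, Set.mem_toFinset] at hx
    by_cases hyX : y ∈ X
    · exact hXfS (by rw [hXf, Set.mem_toFinset]; exact hyX)
    · refine Finset.mem_union_right _ ?_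
      rw [hYdef, Set.mem_toFinset]
      exact ⟨⟨x, hx, hxy⟩, hyX⟩
  have hmain := edges_within G' D Xf S hdeg' hS' hXfS
  set Es := G'.edgeFinset.filter (fun e => ∀ v ∈ e, v ∈ S) with hEs
  have hkle : S.card * D / 6 ≤ Es.card := by
    have h6 : S.card * D ≤ 6 * Es.card := by
      calc S.card * D ≤ (3 * Xf.card) * D := Nat.mul_le_mul_right D (by omega)
        _ = 3 * (Xf.card * D) := by ring
        _ ≤ 3 * (2 * Es.card) := Nat.mul_le_mul_left 3 hmain
        _ = 6 * Es.card := by ring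
    calc S.card * D / 6 ≤ 6 * Es.card / 6 := Nat.div_le_div_right h6
      _ = Es.card := Nat.mul_div_cancel_left _ (by norm_num)
  obtain ⟨F, hFEs, hFcard⟩ := Finset.exists_subset_card_eq hkle
  have hEsPairs : Es ⊆ pairsIn S := by
    intro e he
    rw [hEs, mem_filter] at he
    obtain ⟨he1, he2⟩ := he
    induction e with
    | _ a b =>
      rw [SimpleGraph.mem_edgeFinset, SimpleGraph.mem_edgeSet] at he1
      exact mem_pairsIn (he2 a (by simp)) (he2 b (by simp)) he1.ne
  refine ⟨S, hSpos, hScard, F, Finset.mem_powersetCard.2 ⟨hFEs.trans hEsPairs, hFcard⟩, ?_⟩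
  intro e he
  have h1 : e ∈ Es := hFEs (Finset.mem_coe.1 he)
  rw [hEs, mem_filter] at h1
  have h2 : e ∈ G'.edgeSet := SimpleGraph.mem_edgeFinset.1 h1.1
  exact SimpleGraph.edgeSet_mono hle h2



lemma fact_lower : ∀ k : ℕ, ((k : ℝ)/3)^k ≤ k.factorial := by
  intro k
  induction k with
  | zero => simp
  | succ k ih =>
    rcases Nat.eq_zero_or_pos k with rfl | hk
    · norm_num
    have hk0 : (k:ℝ) ≠ 0 := Nat.cast_ne_zero.2 hk.ne'
    have hkpos : (0:ℝ) < k := by positivity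
    have h1 : ((k+1:ℝ)/k)^k ≤ 3 := by
      have h2 : (k+1:ℝ)/k = 1/k + 1 := by field_simp; ring
      have h3 : (1/(k:ℝ) + 1) ≤ Real.exp (1/k) := Real.add_one_le_exp _
      calc ((k+1:ℝ)/k)^k ≤ (Real.exp (1/k))^k := by
            rw [h2]; exact pow_le_pow_left₀ (by positivity) h3 k
        _ = Real.exp 1 := by
            rw [← Real.exp_nat_mul]
            congr 1
            field_simp
        _ ≤ 3 := by linarith [Real.exp_one_lt_d9]
    have key : ((k+1:ℝ)/3)^(k+1) ≤ (k+1) * ((k:ℝ)/3)^k := by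
      have e1 : ((k+1:ℝ)/3)^(k+1) = ((k+1:ℝ)/3) * (((k:ℝ)/3)^k * ((k+1:ℝ)/k)^k) := by
        rw [pow_succ]
        rw [← mul_pow]
        have : (k:ℝ)/3 * ((k+1)/k) = (k+1)/3 := by field_simp
        rw [this]; ring
      rw [e1]
      have h4 : ((k:ℝ)/3)^k * ((k+1:ℝ)/k)^k ≤ ((k:ℝ)/3)^k * 3 :=
        mul_le_mul_of_nonneg_left h1 (by positivity)
      calc ((k+1:ℝ)/3) * (((k:ℝ)/3)^k * ((k+1:ℝ)/k)^k)
          ≤ ((k+1:ℝ)/3) * (((k:ℝ)/3)^k * 3) := by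
            apply mul_le_mul_of_nonneg_left h4 (by positivity)
        _ = (k+1) * ((k:ℝ)/3)^k := by ring
    have goal2 : (k+1:ℝ) * ((k:ℝ)/3)^k ≤ ((k+1).factorial : ℕ) := by
      push_cast [Nat.factorial_succ]
      have := mul_le_mul_of_nonneg_left ih (by positivity : (0:ℝ) ≤ (k:ℝ)+1)
      linarith
    have : (((k+1:ℕ):ℝ)/3)^(k+1) = ((k+1:ℝ)/3)^(k+1) := by push_cast; ring_nf
    rw [this]
    exact le_trans key goal2


lemma numeric (n s D k : ℕ) (p ε' : ℝ) (hp0 : 0 < p) (hp1 : p ≤ 1) (hε' : 0 < ε') (hn : 2 ≤ n)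
    (hs1 : 1 ≤ s) (hsmax : (s:ℝ) ≤ 3*ε'*n/80) (hD42 : 42 ≤ D) (hDc : ε' * n * p ≤ D)
    (hk : k = s * D / 6)
    (hgrow : ((n:ℝ))^2 ≤ (80/63) ^ (D / 7)) :
    (n:ℝ)^s * ((s^2).choose k : ℝ) * p^k ≤ (1/(n:ℝ))^s := by
  have hn0 : (0:ℝ) < n := by positivity
  have hs0 : (0:ℝ) < s := by exact_mod_cast hs1
  set m := D / 7 with hm
  have hm6 : 6 ≤ m := by
    have := Nat.div_le_div_right (c := 7) hD42
    simpa using this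
  have h1 : 7*m ≤ D := by
    have := Nat.div_mul_le_self D 7
    omega
  have h2 : s*D < 6*(k+1) := by
    rw [hk]
    have h2a := Nat.div_add_mod (s*D) 6
    have h2b := Nat.mod_lt (s*D) (by norm_num : (0:ℕ) < 6)
    omega
  have h3 : 7*(s*m) ≤ s*D := by
    calc 7*(s*m) = s*(7*m) := by ring
      _ ≤ s*D := Nat.mul_le_mul_left _ h1
  have hsm : s*m ≤ k := by omega
  have h5 : m ≤ s*m := Nat.le_mul_of_pos_left m hs1
  have hk1 : 1 ≤ k := by omega
  have h6 : s*D ≤ 7*k := by omega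
  have hkpos : (0:ℝ) < k := by exact_mod_cast hk1
  have hD0 : (0:ℝ) < D := by
    have : (0:ℝ) < ε' * n * p := by positivity
    linarith
  -- choose bound
  have hchoose : ((s^2).choose k : ℝ) ≤ ((s:ℝ)^2)^k / (k.factorial) := by
    have := Nat.choose_le_pow_div (α := ℝ) k (s^2)
    push_cast at this ⊢
    exact this
  have hfactpos : (0:ℝ) < ((k:ℝ)/3)^k := by positivity
  have hfact := fact_lower k
  have hchoose2 : ((s^2).choose k : ℝ) ≤ (3*(s:ℝ)^2/k)^k := by
    refine hchoose.trans ?_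
    have hd : ((s:ℝ)^2)^k / (k.factorial) ≤ ((s:ℝ)^2)^k / (((k:ℝ)/3)^k) :=
      div_le_div_of_nonneg_left (by positivity) hfactpos hfact
    refine hd.trans (le_of_eq ?_)
    have hkne : (k:ℝ) ≠ 0 := hkpos.ne'
    rw [← div_pow]
    congr 1
    rw [div_div_eq_mul_div]
    ring
  -- theta bound
  have htheta : 3*(s:ℝ)^2*p/k ≤ 63/80 := by
    rw [div_le_div_iff₀ hkpos (by norm_num : (0:ℝ) < 80)]
    have h6R : (s:ℝ)*D ≤ 7*k := by exact_mod_cast h6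
    have hsm80 : 80*(s:ℝ) ≤ 3*ε'*n := by
      rw [le_div_iff₀ (by norm_num : (0:ℝ) < 80)] at hsmax
      linarith [hsmax]
    nlinarith [mul_le_mul_of_nonneg_right h6R (le_of_lt hp0),
      mul_le_mul_of_nonneg_right hDc (mul_nonneg hs0.le hp0.le),
      mul_le_mul_of_nonneg_right hsm80 (mul_nonneg (mul_nonneg hs0.le hp0.le) hε'.le),
      mul_pos hs0 hp0]
  have hterm : ((s^2).choose k : ℝ) * p^k ≤ (63/80)^k := by
    calc ((s^2).choose k : ℝ) * p^k ≤ (3*(s:ℝ)^2/k)^k * p^k :=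
          mul_le_mul_of_nonneg_right hchoose2 (by positivity)
      _ = (3*(s:ℝ)^2*p/k)^k := by rw [← mul_pow]; congr 1; ring
      _ ≤ (63/80)^k := pow_le_pow_left₀ (by positivity) htheta k
  have hgeo : ((63:ℝ)/80)^k ≤ ((63/80:ℝ)^m)^s := by
    rw [← pow_mul]
    have : (63/80:ℝ)^k ≤ (63/80)^(s*m) := by
      apply pow_le_pow_of_le_one (by norm_num) (by norm_num) ?_
      omega
    calc ((63:ℝ)/80)^k ≤ (63/80)^(s*m) := this
      _ = (63/80)^(m*s) := by rw [Nat.mul_comm]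
  have hnb : (n:ℝ) * (63/80:ℝ)^m ≤ 1/n := by
    have hinv : (63/80:ℝ)^m = ((80/63:ℝ)^m)⁻¹ := by
      rw [← inv_pow]
      norm_num
    rw [hinv]
    have hpow : (0:ℝ) < (80/63:ℝ)^m := by positivity
    rw [mul_inv_le_iff₀ hpow, div_mul_eq_mul_div, le_div_iff₀ hn0]
    calc (n:ℝ)*n = (n:ℝ)^2 := by ring
      _ ≤ (80/63)^(D/7) := hgrow
      _ = 1*(80/63)^m := by rw [one_mul]
  calc (n:ℝ)^s * ((s^2).choose k : ℝ) * p^k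
      ≤ (n:ℝ)^s * ((63/80:ℝ)^m)^s := by
        rw [mul_assoc]
        refine mul_le_mul_of_nonneg_left (hterm.trans hgeo) (by positivity)
    _ = ((n:ℝ) * (63/80:ℝ)^m)^s := by rw [mul_pow]
    _ ≤ (1/(n:ℝ))^s := pow_le_pow_left₀ (by positivity) hnb s

lemma geom_tail (n N : ℕ) (hn : 2 ≤ n) : ∑ s ∈ Icc 1 N, (1/(n:ℝ))^s ≤ 2/n := by
  have hn0 : (0:ℝ) < n := by positivity
  have hr : (1/(n:ℝ)) ≤ 1/2 := by
    apply div_le_div_of_nonneg_left one_pos.le (by norm_num)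
    exact_mod_cast hn
  have h1 : ∑ s ∈ Icc 1 N, (1/(n:ℝ))^s = ∑ i ∈ range N, (1/(n:ℝ))^(1+i) := by
    rw [← Finset.Ico_add_one_right_eq_Icc, Finset.sum_Ico_eq_sum_range]
    simp
  rw [h1]
  have h2 : ∀ i ∈ range N, (1/(n:ℝ))^(1+i) ≤ (1/n) * (1/2)^i := by
    intro i _
    rw [pow_add, pow_one]
    refine mul_le_mul_of_nonneg_left ?_ (by positivity)
    exact pow_le_pow_left₀ (by positivity) hr i
  calc ∑ i ∈ range N, (1/(n:ℝ))^(1+i) ≤ ∑ i ∈ range N, (1/(n:ℝ)) * (1/2)^i :=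
        Finset.sum_le_sum h2
    _ = (1/n) * ∑ i ∈ range N, ((1:ℝ)/2)^i := by rw [Finset.mul_sum]
    _ ≤ (1/n) * 2 := mul_le_mul_of_nonneg_left (sum_geometric_two_le N) (by positivity)
    _ = 2/n := by ring


lemma master {n : ℕ} {p ε' : ℝ} (hp0 : 0 < p) (hp1 : p ≤ 1) (hε' : 0 < ε') (hn : 2 ≤ n)
    (hD42 : 42 ≤ ⌈ε' * (n:ℝ) * p⌉₊)
    (hgrow : ((n:ℝ))^2 ≤ (80/63) ^ (⌈ε' * (n:ℝ) * p⌉₊ / 7)) :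
    erProb n p (fun G => ¬ ∀ G' : SimpleGraph (Fin n), G' ≤ G →
          (∀ v, ε' * n * p ≤ (deg G' v : ℝ)) →
          ∀ X : Set (Fin n), (X.ncard : ℝ) ≤ ε' * n / 80 →
            2 * X.ncard ≤ (nbhd G' X \ X).ncard) ≤ 2 / n := by
  classical
  set D := ⌈ε' * (n:ℝ) * p⌉₊ with hd
  set smax := ⌊3 * ε' * (n:ℝ) / 80⌋₊ with hsmaxd
  have hn0 : (0:ℝ) < n := by positivity
  have step1 : erProb n p (fun G => ¬ ∀ G' : SimpleGraph (Fin n), G' ≤ G →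
          (∀ v, ε' * n * p ≤ (deg G' v : ℝ)) →
          ∀ X : Set (Fin n), (X.ncard : ℝ) ≤ ε' * n / 80 →
            2 * X.ncard ≤ (nbhd G' X \ X).ncard)
      ≤ erProb n p (fun G => ∃ s ∈ Icc 1 smax,
          ∃ S ∈ Finset.powersetCard s (Finset.univ : Finset (Fin n)),
          ∃ F ∈ (pairsIn S).powersetCard (s * D / 6),
            (↑F : Set (Sym2 (Fin n))) ⊆ G.edgeSet) := by
    refine erProb_mono hp0.le hp1 ?_
    intro G hG
    push_neg at hG
    obtain ⟨G', hle, hdeg, X, hX, hbad⟩ := hG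
    have hdegD : ∀ v, D ≤ deg G' v := fun v => Nat.ceil_le.2 (hdeg v)
    obtain ⟨S, hS1, hS3, F, hF, hFE⟩ := reduction D G G' hle hdegD X hbad
    refine ⟨S.card, ?_, S, Finset.mem_powersetCard.2 ⟨Finset.subset_univ S, rfl⟩, F, hF, hFE⟩
    rw [mem_Icc]
    refine ⟨hS1, ?_⟩
    rw [hsmaxd]
    apply Nat.le_floor
    have c1 : (S.card : ℝ) ≤ 3 * (X.ncard : ℝ) := by exact_mod_cast hS3
    calc (S.card : ℝ) ≤ 3 * (X.ncard : ℝ) := c1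
      _ ≤ 3 * (ε' * n / 80) := by linarith
      _ = 3 * ε' * n / 80 := by ring
  refine le_trans step1 ?_
  have key : ∀ s ∈ Icc 1 smax,
      erProb n p (fun G => ∃ S ∈ Finset.powersetCard s (Finset.univ : Finset (Fin n)),
          ∃ F ∈ (pairsIn S).powersetCard (s * D / 6),
            (↑F : Set (Sym2 (Fin n))) ⊆ G.edgeSet) ≤ (1/(n:ℝ))^s := by
    intro s hs
    rw [mem_Icc] at hs
    set k := s * D / 6 with hkdef
    have perS : ∀ S ∈ Finset.powersetCard s (Finset.univ : Finset (Fin n)),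
        erProb n p (fun G => ∃ F ∈ (pairsIn S).powersetCard k,
            (↑F : Set (Sym2 (Fin n))) ⊆ G.edgeSet)
          ≤ ((s^2).choose k : ℝ) * p^k := by
      intro S hS
      have hScard : S.card = s := (Finset.mem_powersetCard.1 hS).2
      calc erProb n p (fun G => ∃ F ∈ (pairsIn S).powersetCard k,
              (↑F : Set (Sym2 (Fin n))) ⊆ G.edgeSet)
          ≤ ∑ F ∈ (pairsIn S).powersetCard k,
              erProb n p (fun G => (↑F : Set (Sym2 (Fin n))) ⊆ G.edgeSet) :=
            erProb_union_le hp0.le hp1 _ _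
        _ ≤ ∑ _F ∈ (pairsIn S).powersetCard k, p^k := by
            refine Finset.sum_le_sum fun F hF => ?_
            obtain ⟨hsub, hcard⟩ := Finset.mem_powersetCard.1 hF
            have := erProb_subset_edges_le hp0.le hp1 F (hsub.trans pairsIn_subset_pot)
            rwa [hcard] at this
        _ = (((pairsIn S).card.choose k : ℕ) : ℝ) * p^k := by
            rw [Finset.sum_const, Finset.card_powersetCard, nsmul_eq_mul]
        _ ≤ ((s^2).choose k : ℝ) * p^k := by
            refine mul_le_mul_of_nonneg_right ?_ (by positivity)
            have h2 : (pairsIn S).card ≤ s^2 := by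
              have := pairsIn_card_le (S := S)
              rwa [hScard] at this
            exact_mod_cast Nat.choose_le_choose k h2
    calc erProb n p (fun G => ∃ S ∈ Finset.powersetCard s (Finset.univ : Finset (Fin n)),
            ∃ F ∈ (pairsIn S).powersetCard k,
              (↑F : Set (Sym2 (Fin n))) ⊆ G.edgeSet)
        ≤ ∑ S ∈ Finset.powersetCard s (Finset.univ : Finset (Fin n)),
            erProb n p (fun G => ∃ F ∈ (pairsIn S).powersetCard k,
              (↑F : Set (Sym2 (Fin n))) ⊆ G.edgeSet) := erProb_union_le hp0.le hp1 _ _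
      _ ≤ ∑ _S ∈ Finset.powersetCard s (Finset.univ : Finset (Fin n)),
            ((s^2).choose k : ℝ) * p^k := Finset.sum_le_sum perS
      _ = ((n.choose s : ℕ) : ℝ) * (((s^2).choose k : ℝ) * p^k) := by
          rw [Finset.sum_const, Finset.card_powersetCard, Finset.card_univ, Fintype.card_fin,
            nsmul_eq_mul]
      _ ≤ (n:ℝ)^s * (((s^2).choose k : ℝ) * p^k) := by
          refine mul_le_mul_of_nonneg_right ?_ (by positivity)
          exact_mod_cast Nat.choose_le_pow n s
      _ ≤ (1/(n:ℝ))^s := by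
          rw [← mul_assoc]
          refine numeric n s D k p ε' hp0 hp1 hε' hn hs.1 ?_ hD42 (Nat.le_ceil _) hkdef hgrow
          have h1 : (smax : ℝ) ≤ 3 * ε' * n / 80 := by
            rw [hsmaxd]
            exact Nat.floor_le (by positivity)
          have h2 : (s:ℝ) ≤ smax := by exact_mod_cast hs.2
          linarith
  calc erProb n p (fun G => ∃ s ∈ Icc 1 smax,
          ∃ S ∈ Finset.powersetCard s (Finset.univ : Finset (Fin n)),
          ∃ F ∈ (pairsIn S).powersetCard (s * D / 6),
            (↑F : Set (Sym2 (Fin n))) ⊆ G.edgeSet)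
      ≤ ∑ s ∈ Icc 1 smax, erProb n p
          (fun G => ∃ S ∈ Finset.powersetCard s (Finset.univ : Finset (Fin n)),
            ∃ F ∈ (pairsIn S).powersetCard (s * D / 6),
              (↑F : Set (Sym2 (Fin n))) ⊆ G.edgeSet) := erProb_union_le hp0.le hp1 _ _
    _ ≤ ∑ s ∈ Icc 1 smax, (1/(n:ℝ))^s := Finset.sum_le_sum key
    _ ≤ 2 / n := geom_tail n smax hn

end ERAux

/-- Fix an integer `l ≥ 3`, `C > 0` and `ε' > 0`, and let `p = C·n^{−1+1/(l−1)}`. Then a.a.s.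
every subgraph `G' ⊆ G(n,p)` with minimum degree `δ(G') ≥ ε'np` satisfies: every vertex set `X`
with `|X| ≤ ε'n/80` has `|N_{G'}(X) \ X| ≥ 2|X|`. -/
theorem stmt_7 (l : ℕ) (hl : 3 ≤ l) (C : ℝ) (hC : 0 < C) (ε' : ℝ) (hε' : 0 < ε')
    (p : ℕ → ℝ) (hp : ∀ n : ℕ, p n = C * (n : ℝ) ^ (-1 + 1 / ((l : ℝ) - 1))) :
    Tendsto (fun n : ℕ => erProb n (p n) fun G =>
        ∀ G' : SimpleGraph (Fin n), G' ≤ G →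
          (∀ v, ε' * n * p n ≤ (deg G' v : ℝ)) →
          ∀ X : Set (Fin n), (X.ncard : ℝ) ≤ ε' * n / 80 →
            2 * X.ncard ≤ (nbhd G' X \ X).ncard)
      atTop (nhds 1) := by

  classical
  have hl2 : (2:ℝ) ≤ (l:ℝ) - 1 := by
    have : (3:ℝ) ≤ (l:ℝ) := by exact_mod_cast hl
    linarith
  set α : ℝ := 1 / ((l:ℝ) - 1) with hα_def
  have hα : 0 < α := by positivity
  have hα2 : α ≤ 1/2 := by
    rw [hα_def]
    rw [div_le_div_iff₀ (by linarith) (by norm_num)]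
    linarith
  set β : ℝ := -1 + α with hβ_def
  have hβ : β < 0 := by rw [hβ_def]; linarith
  -- identity for ε' * n * p n
  have hnp : ∀ n : ℕ, 1 ≤ n → ε' * n * p n = ε' * C * (n:ℝ)^α := by
    intro n hn
    have hn0 : (0:ℝ) < n := by exact_mod_cast hn
    rw [hp n]
    have h1 : (n:ℝ) * (n:ℝ)^β = (n:ℝ)^α := by
      calc (n:ℝ) * (n:ℝ)^β = (n:ℝ)^(1:ℝ) * (n:ℝ)^β := by rw [Real.rpow_one]
        _ = (n:ℝ)^(1 + β) := (Real.rpow_add hn0 1 β).symm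
        _ = (n:ℝ)^α := by rw [hβ_def]; ring_nf
    calc ε' * n * (C * (n:ℝ)^β) = ε' * C * ((n:ℝ) * (n:ℝ)^β) := by ring
      _ = ε' * C * (n:ℝ)^α := by rw [h1]
  -- p n > 0 eventually
  have hp0ev : ∀ᶠ n : ℕ in atTop, 0 < p n := by
    filter_upwards [eventually_ge_atTop 1] with n hn
    have hn0 : (0:ℝ) < n := by exact_mod_cast hn
    rw [hp n]
    exact mul_pos hC (Real.rpow_pos_of_pos hn0 _)
  -- p n ≤ 1 eventually
  have hptend : Tendsto p atTop (nhds 0) := by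
    have h1 : Tendsto (fun x : ℝ => x ^ β) atTop (nhds 0) := by
      have := tendsto_rpow_neg_atTop (y := -β) (by linarith)
      simpa using this
    have h2 : Tendsto (fun n : ℕ => C * ((n:ℝ)) ^ β) atTop (nhds (C * 0)) :=
      (h1.comp tendsto_natCast_atTop_atTop).const_mul C
    rw [mul_zero] at h2
    refine h2.congr fun n => (hp n).symm
  have hp1ev : ∀ᶠ n : ℕ in atTop, p n ≤ 1 :=
    (hptend.eventually_lt_const (by norm_num : (0:ℝ) < 1)).mono fun n h => h.le
  -- growth of ε' C n^α
  have hTend : Tendsto (fun n : ℕ => ε' * C * (n:ℝ)^α) atTop atTop := by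
    have h1 : Tendsto (fun x : ℝ => x ^ α) atTop atTop := tendsto_rpow_atTop hα
    exact (h1.comp tendsto_natCast_atTop_atTop).const_mul_atTop (by positivity)
  have hD42ev : ∀ᶠ n : ℕ in atTop, 42 ≤ ⌈ε' * (n:ℝ) * p n⌉₊ := by
    filter_upwards [eventually_ge_atTop 1, hTend.eventually_ge_atTop 42] with n h1 h2
    have hx : (42:ℝ) ≤ ε' * n * p n := by rw [hnp n h1]; exact h2
    have := hx.trans (Nat.le_ceil _)
    exact_mod_cast this
  -- the growth condition
  have hLpos : 0 < Real.log (80/63) := Real.log_pos (by norm_num)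
  set L := Real.log (80/63) with hLdef
  have hlogev : ∀ᶠ n : ℕ in atTop,
      |Real.log (n:ℝ)| ≤ (ε' * C * L / 28) * |(n:ℝ) ^ α| := by
    have h := (isLittleO_log_rpow_atTop hα).def (c := ε' * C * L / 28) (by positivity)
    have := tendsto_natCast_atTop_atTop (R := ℝ) |>.eventually h
    filter_upwards [this] with n hn
    simpa [Real.norm_eq_abs] using hn
  have hgrowev : ∀ᶠ n : ℕ in atTop,
      ((n:ℝ))^2 ≤ ((80:ℝ)/63) ^ (⌈ε' * (n:ℝ) * p n⌉₊ / 7) := by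
    filter_upwards [eventually_ge_atTop 1, hlogev, hTend.eventually_ge_atTop 28] with n h1 h2 h3
    have hn0 : (0:ℝ) < n := by exact_mod_cast h1
    have hn1 : (1:ℝ) ≤ n := by exact_mod_cast h1
    set x := ε' * n * p n with hxdef
    have hxeq : x = ε' * C * (n:ℝ)^α := hnp n h1
    have hx28 : (28:ℝ) ≤ x := by rw [hxeq]; exact h3
    set D := ⌈x⌉₊ with hDdef
    set m := D / 7 with hmdef
    have hDx : x ≤ D := Nat.le_ceil x
    have hDm : D ≤ 7*m + 6 := by
      have h4 := Nat.div_add_mod D 7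
      have h5 := Nat.mod_lt D (by norm_num : (0:ℕ) < 7)
      omega
    have hmR : (x - 6)/7 ≤ (m:ℝ) := by
      have : (D:ℝ) ≤ 7*m + 6 := by exact_mod_cast hDm
      have h7 : x ≤ 7*(m:ℝ) + 6 := hDx.trans this
      linarith
    -- log comparison
    have hlogn : Real.log (n:ℝ) ≤ (ε' * C * L / 28) * (n:ℝ)^α := by
      have ha : |Real.log (n:ℝ)| = Real.log (n:ℝ) :=
        abs_of_nonneg (Real.log_nonneg hn1)
      have hb : |(n:ℝ)^α| = (n:ℝ)^α := abs_of_nonneg (Real.rpow_nonneg hn0.le α)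
      rw [ha, hb] at h2
      exact h2
    have hkey : 2 * Real.log (n:ℝ) ≤ (m:ℝ) * L := by
      have e1 : 2 * Real.log (n:ℝ) ≤ x * L / 14 := by
        have : (ε' * C * L / 28) * (n:ℝ)^α = x * L / 28 := by rw [hxeq]; ring
        rw [this] at hlogn
        linarith
      have e2 : x * L / 7 - 6 * L / 7 ≤ (m:ℝ) * L := by
        have := mul_le_mul_of_nonneg_right hmR hLpos.le
        calc x * L / 7 - 6*L/7 = (x-6)/7 * L := by ring
          _ ≤ (m:ℝ) * L := this
      nlinarith [hLpos]
    -- exponentiate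
    have hq : (0:ℝ) < (80:ℝ)/63 := by norm_num
    have hgoal : Real.log ((n:ℝ)^2) ≤ Real.log (((80:ℝ)/63)^m) := by
      rw [Real.log_pow, Real.log_pow]
      push_cast
      calc 2 * Real.log (n:ℝ) ≤ (m:ℝ) * L := hkey
        _ = (m:ℝ) * Real.log (80/63) := by rw [hLdef]
    have := (Real.log_le_log_iff (by positivity) (by positivity)).1 hgoal
    exact this
  -- final squeeze
  have hbound : ∀ᶠ n : ℕ in atTop,
      1 - 2/(n:ℝ) ≤ erProb n (p n) (fun G =>
        ∀ G' : SimpleGraph (Fin n), G' ≤ G →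
          (∀ v, ε' * n * p n ≤ (deg G' v : ℝ)) →
          ∀ X : Set (Fin n), (X.ncard : ℝ) ≤ ε' * n / 80 →
            2 * X.ncard ≤ (nbhd G' X \ X).ncard)
      ∧ erProb n (p n) (fun G =>
        ∀ G' : SimpleGraph (Fin n), G' ≤ G →
          (∀ v, ε' * n * p n ≤ (deg G' v : ℝ)) →
          ∀ X : Set (Fin n), (X.ncard : ℝ) ≤ ε' * n / 80 →
            2 * X.ncard ≤ (nbhd G' X \ X).ncard) ≤ 1 := by
    filter_upwards [hp0ev, hp1ev, hD42ev, hgrowev, eventually_ge_atTop 2] with n h0 h1 h42 hg h2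
    constructor
    · have hm := ERAux.master (n := n) (p := p n) (ε' := ε') h0 h1 hε' h2 h42 hg
      have hc := ERAux.erProb_add_compl (n := n) (p := p n) (fun G =>
        ∀ G' : SimpleGraph (Fin n), G' ≤ G →
          (∀ v, ε' * n * p n ≤ (deg G' v : ℝ)) →
          ∀ X : Set (Fin n), (X.ncard : ℝ) ≤ ε' * n / 80 →
            2 * X.ncard ≤ (nbhd G' X \ X).ncard)
      linarith
    · exact ERAux.erProb_le_one h0.le h1 _
  have hlow : Tendsto (fun n : ℕ => 1 - 2/(n:ℝ)) atTop (nhds 1) := by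
    have := tendsto_const_div_atTop_nhds_zero_nat (2:ℝ)
    have h2 := this.const_sub 1
    simpa using h2
  refine tendsto_of_tendsto_of_tendsto_of_le_of_le' hlow tendsto_const_nhds ?_ ?_
  · exact hbound.mono fun n h => h.1
  · exact hbound.mono fun n h => h.2
end
end

section
/- Let ε, ε' satisfy 0 ≤ 5ε' < ε, and let G be an (n,ε',d,λ)-graph with λ ≤ ε·d/20. If H is a subgraph of G with maximum degree Δ(H) ≤ (1/2 − ε)d and G' = G − H, then every vertex subset X with |X| ≤ ε·n/4 satisfies |N_{G'}(X)| ≥ min( ε·n/2 , (d²/(4λ²))·|X| ). -/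
open Filter Finset
open scoped Classical

noncomputable section

/-- `e_G(X,Y)`: the number of ordered pairs `(x,y)` with `x ∈ X`, `y ∈ Y` and `xy` an edge. -/
def epairs {V : Type*} (G : SimpleGraph V) (X Y : Set V) : ℕ :=
  {q : V × V | q.1 ∈ X ∧ q.2 ∈ Y ∧ G.Adj q.1 q.2}.ncard

/-- An `(n,ε,d,λ)`-graph: a graph on `n` vertices with minimum degree at least `(1-ε)d` such
that `|e(X,Y) - (d/n)|X||Y|| ≤ λ√(|X||Y|)` for all vertex sets `X`, `Y`. -/
def IsNEDL (n : ℕ) (eps d lam : ℝ) (G : SimpleGraph (Fin n)) : Prop :=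
  (∀ v, (1 - eps) * d ≤ (deg G v : ℝ)) ∧
  ∀ X Y : Set (Fin n),
    |(epairs G X Y : ℝ) - d / n * X.ncard * Y.ncard| ≤ lam * Real.sqrt (X.ncard * Y.ncard)

variable {n : ℕ}

lemma deg_eq_degree (G : SimpleGraph (Fin n)) (v : Fin n) : deg G v = G.degree v := by
  rw [deg, Set.ncard_eq_toFinset_card', Set.toFinset_card,
    SimpleGraph.card_neighborSet_eq_degree]

lemma epairs_eq_card (G : SimpleGraph (Fin n)) (X Y : Set (Fin n)) :
    epairs G X Y
      = (Finset.univ.filter fun q : Fin n × Fin n => q.1 ∈ X ∧ q.2 ∈ Y ∧ G.Adj q.1 q.2).card := by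
  rw [epairs, Set.ncard_eq_toFinset_card']
  congr 1
  ext q
  simp

lemma epairs_singleton_self (G : SimpleGraph (Fin n)) (v : Fin n) :
    epairs G {v} {v} = 0 := by
  rw [epairs, Set.ncard_eq_zero]
  ext ⟨a, b⟩
  simp only [Set.mem_setOf_eq, Set.mem_singleton_iff, Set.mem_empty_iff_false, iff_false]
  rintro ⟨rfl, rfl, h⟩
  exact G.irrefl h

lemma epairs_singleton_univ (G : SimpleGraph (Fin n)) (v : Fin n) :
    epairs G {v} Set.univ = deg G v := by
  rw [epairs_eq_card, deg_eq_degree, ← SimpleGraph.card_neighborFinset_eq_degree]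
  trans #({v} ×ˢ G.neighborFinset v)
  · congr 1
    ext ⟨a, b⟩
    simp [SimpleGraph.mem_neighborFinset]
    aesop
  · simp

lemma epairs_mono {G G' : SimpleGraph (Fin n)} (h : G' ≤ G) (X Y : Set (Fin n)) :
    epairs G' X Y ≤ epairs G X Y := by
  apply Set.ncard_le_ncard
  · rintro ⟨a, b⟩ ⟨h1, h2, h3⟩
    exact ⟨h1, h2, h h3⟩
  · exact Set.toFinite _

lemma deg_sdiff_ge {G H : SimpleGraph (Fin n)} (hHG : H ≤ G) (v : Fin n) :
    (deg G v : ℝ) - deg H v ≤ (deg (G \ H) v : ℝ) := by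
  have hsub : H.neighborSet v ⊆ G.neighborSet v := fun y hy => hHG hy
  have : (G \ H).neighborSet v = G.neighborSet v \ H.neighborSet v := by
    ext y; simp [SimpleGraph.mem_neighborSet]
  have hle : deg H v ≤ deg G v := Set.ncard_le_ncard hsub (Set.toFinite _)
  simp only [deg]
  rw [this, Set.ncard_diff hsub,
    Nat.cast_sub (Set.ncard_le_ncard hsub (Set.toFinite _))]

-- epairs lower bound via sum of degrees
lemma epairs_nbhd_ge (G' : SimpleGraph (Fin n)) (X : Set (Fin n)) :
    ∑ x ∈ X.toFinset, deg G' x ≤ epairs G' X (nbhd G' X) := by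
  rw [epairs_eq_card]
  have hset : (Finset.univ.filter fun q : Fin n × Fin n =>
      q.1 ∈ X ∧ q.2 ∈ nbhd G' X ∧ G'.Adj q.1 q.2)
      = (Finset.univ.filter fun q : Fin n × Fin n => q.1 ∈ X ∧ G'.Adj q.1 q.2) := by
    ext ⟨a, b⟩
    simp only [mem_filter, mem_univ, true_and]
    exact ⟨fun ⟨h1, _, h3⟩ => ⟨h1, h3⟩, fun ⟨h1, h3⟩ => ⟨h1, ⟨a, h1, h3⟩, h3⟩⟩
  rw [hset]
  rw [Finset.card_eq_sum_card_fiberwise (f := Prod.fst) (t := X.toFinset)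
    (fun q hq => by exact Set.mem_toFinset.mpr (Finset.mem_filter.mp hq).2.1)]
  apply le_of_eq
  apply Finset.sum_congr rfl
  intro x hx
  have hxX : x ∈ X := Set.mem_toFinset.mp hx
  rw [deg_eq_degree, ← SimpleGraph.card_neighborFinset_eq_degree]
  symm
  trans #({x} ×ˢ G'.neighborFinset x)
  · congr 1
    ext ⟨a, b⟩
    simp [SimpleGraph.mem_neighborFinset]
    aesop
  · simp


/-- Let `0 ≤ 5ε' < ε` and let `G` be an `(n,ε',d,λ)`-graph with `λ ≤ εd/20`. If `H ⊆ G` has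
`Δ(H) ≤ (1/2 − ε)d` and `G' = G − H`, then every vertex set `X` with `|X| ≤ εn/4` satisfies
`|N_{G'}(X)| ≥ min(εn/2, (d²/(4λ²))·|X|)`. -/
theorem stmt_9 (n : ℕ) (ε ε' d lam : ℝ) (hε' : 0 ≤ ε') (hεε' : 5 * ε' < ε)
    (G : SimpleGraph (Fin n)) (hG : IsNEDL n ε' d lam G) (hlam : lam ≤ ε * d / 20)
    (H : SimpleGraph (Fin n)) (hHG : H ≤ G)
    (hH : ∀ v, (deg H v : ℝ) ≤ (1 / 2 - ε) * d) :
    ∀ X : Set (Fin n), (X.ncard : ℝ) ≤ ε * n / 4 →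
      min (ε * n / 2) (d ^ 2 / (4 * lam ^ 2) * X.ncard) ≤ ((nbhd (G \ H) X).ncard : ℝ) := by
  intro X hX
  have hε : 0 < ε := lt_of_le_of_lt (by linarith) hεε'
  rcases X.eq_empty_or_nonempty with rfl | ⟨v, hv⟩
  · simp only [Set.ncard_empty, Nat.cast_zero, mul_zero]
    exact le_trans (min_le_right _ _) (by positivity)
  -- X nonempty: n > 0
  have hn : 0 < n := by
    rcases Nat.eq_zero_or_pos n with rfl | h
    · exact absurd v.2 (by simp)
    · exact h
  have hnR : (0 : ℝ) < n := by exact_mod_cast hn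
  -- From X = Y = {v}: d/n ≤ lam
  have hdn : d / n ≤ lam := by
    have := hG.2 {v} {v}
    rw [epairs_singleton_self] at this
    simp only [Set.ncard_singleton, Nat.cast_one, mul_one, Nat.cast_zero] at this
    rw [Real.sqrt_one, mul_one] at this
    have := abs_le.mp this
    linarith [this.1]
  -- From X = {v}, Y = univ: |deg G v − d| ≤ lam √n
  have hdeguniv : (deg G v : ℝ) - d ≤ lam * Real.sqrt n := by
    have := hG.2 {v} Set.univ
    rw [epairs_singleton_univ] at this
    simp only [Set.ncard_singleton, Nat.cast_one, mul_one, Set.ncard_univ, Nat.card_eq_fintype_card,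
      Fintype.card_fin, one_mul] at this
    have h2 : d / ↑n * ↑n = d := by field_simp
    rw [h2] at this
    have := abs_le.mp this
    linarith [this.2]
  -- d ≥ 0
  have hd0 : 0 ≤ d := by
    by_contra hd
    push_neg at hd
    have hlamneg : lam < 0 := lt_of_le_of_lt hlam (by nlinarith)
    have hsq : 0 < Real.sqrt n := Real.sqrt_pos.mpr hnR
    have hdeg : (0:ℝ) ≤ (deg G v : ℝ) := Nat.cast_nonneg _
    nlinarith [mul_neg_of_neg_of_pos hlamneg hsq]
  rcases eq_or_lt_of_le hd0 with rfl | hd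
  · refine le_trans (min_le_right _ _) ?_
    simp
  -- d > 0, so lam > 0
  have hlam0 : 0 < lam := lt_of_lt_of_le (by positivity) hdn
  -- notation
  set Y := nbhd (G \ H) X with hY
  set x : ℝ := (X.ncard : ℝ) with hx
  set y : ℝ := (Y.ncard : ℝ) with hy
  have hx1 : 1 ≤ x := by
    have h : 0 < X.ncard := (Set.ncard_pos (Set.toFinite _)).mpr ⟨v, hv⟩
    rw [hx]
    exact_mod_cast h
  have hy0 : 0 ≤ y := Nat.cast_nonneg _
  -- lower bound on epairs (G\H) X Y
  have hlow : x * ((1 - ε') * d - (1 / 2 - ε) * d) ≤ (epairs (G \ H) X Y : ℝ) := by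
    have h1 := epairs_nbhd_ge (G \ H) X
    have h2 : ∀ w ∈ X.toFinset, (1 - ε') * d - (1 / 2 - ε) * d ≤ (deg (G \ H) w : ℝ) := by
      intro w _
      have := deg_sdiff_ge hHG w
      have h3 := hG.1 w
      have h4 := hH w
      linarith
    have h5 := Finset.card_nsmul_le_sum X.toFinset (fun w => (deg (G \ H) w : ℝ)) _ h2
    rw [nsmul_eq_mul] at h5
    have hcard : (X.toFinset.card : ℝ) = x := by
      rw [hx, Set.ncard_eq_toFinset_card']
    have h6 : (∑ w ∈ X.toFinset, (deg (G \ H) w : ℝ)) ≤ (epairs (G \ H) X Y : ℝ) := by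
      rw [← Nat.cast_sum]
      exact_mod_cast h1
    calc x * ((1 - ε') * d - (1 / 2 - ε) * d)
        = (X.toFinset.card : ℝ) * ((1 - ε') * d - (1 / 2 - ε) * d) := by rw [hcard]
      _ ≤ ∑ w ∈ X.toFinset, (deg (G \ H) w : ℝ) := h5
      _ ≤ _ := h6
  -- upper bound via expander mixing
  have hup : (epairs (G \ H) X Y : ℝ) ≤ d / n * x * y + lam * Real.sqrt (x * y) := by
    have h1 : (epairs (G \ H) X Y : ℝ) ≤ (epairs G X Y : ℝ) := by
      exact_mod_cast epairs_mono sdiff_le X Y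
    have h2 := (abs_le.mp (hG.2 X Y)).2
    linarith
  -- contradiction setup
  by_contra hcon
  push_neg at hcon
  have hy1 : y < ε * n / 2 := lt_of_lt_of_le hcon (min_le_left _ _)
  have hy2 : y < d ^ 2 / (4 * lam ^ 2) * x := lt_of_lt_of_le hcon (min_le_right _ _)
  have hxpos : 0 < x := lt_of_lt_of_le one_pos hx1
  -- bound first term
  have hb1 : d / n * x * y < ε * d / 2 * x := by
    have hpos : 0 < d / n * x := by positivity
    calc d / n * x * y < d / n * x * (ε * n / 2) := by
          exact mul_lt_mul_of_pos_left hy1 hpos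
      _ = ε * d / 2 * x := by field_simp
  -- bound second term
  have hb2 : lam * Real.sqrt (x * y) ≤ d * x / 2 := by
    have h1 : x * y ≤ (d * x / (2 * lam)) ^ 2 := by
      have : x * y ≤ x * (d ^ 2 / (4 * lam ^ 2) * x) :=
        mul_le_mul_of_nonneg_left (le_of_lt hy2) (le_of_lt hxpos)
      calc x * y ≤ x * (d ^ 2 / (4 * lam ^ 2) * x) := this
        _ = (d * x / (2 * lam)) ^ 2 := by field_simp; ring
    have h2 : Real.sqrt (x * y) ≤ d * x / (2 * lam) := by
      calc Real.sqrt (x * y) ≤ Real.sqrt ((d * x / (2 * lam)) ^ 2) := Real.sqrt_le_sqrt h1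
        _ = d * x / (2 * lam) := Real.sqrt_sq (by positivity)
    calc lam * Real.sqrt (x * y) ≤ lam * (d * x / (2 * lam)) :=
          mul_le_mul_of_nonneg_left h2 (le_of_lt hlam0)
      _ = d * x / 2 := by field_simp
  -- combine
  have hfinal : x * ((1 - ε') * d - (1 / 2 - ε) * d) < ε * d / 2 * x + d * x / 2 := by
    linarith
  nlinarith [mul_pos hxpos hd]
end
end

section
/- Fix ε > 0. If p = p(n) satisfies n·p(n)/log n → ∞ as n → ∞, then asymptotically almost surely the random graph G = G(n,p) contains a subgraph H with maximum degree Δ(H) ≤ (1/2 + ε)·np such that G − H is bipartite (and in particular contains no odd cycle, so G − H is not pancyclic). -/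
open Filter Finset
open scoped Classical

noncomputable section

/-- A graph on `n` vertices is pancyclic if it contains a cycle of length `t`
for every `3 ≤ t ≤ n`. -/
def Pancyclic {n : ℕ} (G : SimpleGraph (Fin n)) : Prop :=
  ∀ t : ℕ, 3 ≤ t → t ≤ n → hasCycleLength G t

section MaxCut

variable {V : Type*} [Fintype V] (G : SimpleGraph V)

/-- indicator of a monochromatic edge (ordered pair) -/
private def tt (c : V → Bool) (x y : V) : ℕ := if G.Adj x y ∧ c x = c y then 1 else 0

private def Wt (c : V → Bool) : ℕ := ∑ x : V, ∑ y : V, tt G c x y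

private def same (c : V → Bool) (v : V) : ℕ := ∑ y : V, tt G c v y

private def diff (c : V → Bool) (v : V) : ℕ :=
  ∑ y : V, if G.Adj v y ∧ c y ≠ c v then 1 else 0

lemma tt_symm (c : V → Bool) (x y : V) : tt G c x y = tt G c y x := by
  unfold tt
  congr 1
  simp only [eq_iff_iff]
  constructor
  · rintro ⟨h1, h2⟩; exact ⟨h1.symm, h2.symm⟩
  · rintro ⟨h1, h2⟩; exact ⟨h1.symm, h2.symm⟩

lemma tt_flip (c : V → Bool) (v y : V) :
    tt G (Function.update c v (!c v)) v y = if G.Adj v y ∧ c y ≠ c v then 1 else 0 := by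
  unfold tt
  by_cases hy : y = v
  · subst hy; simp [G.irrefl]
  · rw [Function.update_of_ne hy, Function.update_self]
    congr 1
    simp only [eq_iff_iff, and_congr_right_iff]
    intro _
    cases hcv : c v <;> cases hcy : c y <;> simp

lemma tt_flip_ne (c : V → Bool) (v x y : V) (hx : x ≠ v) (hy : y ≠ v) :
    tt G (Function.update c v (!c v)) x y = tt G c x y := by
  unfold tt
  rw [Function.update_of_ne hx, Function.update_of_ne hy]

lemma Wt_split (c : V → Bool) (v : V) :
    Wt G c = 2 * same G c v + ∑ x ∈ univ.erase v, ∑ y ∈ univ.erase v, tt G c x y := by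
  have h1 : Wt G c = same G c v + ∑ x ∈ univ.erase v, ∑ y : V, tt G c x y := by
    unfold Wt same
    rw [← Finset.add_sum_erase (univ : Finset V) (fun x => ∑ y : V, tt G c x y) (mem_univ v)]
  have h2 : ∀ x, (∑ y : V, tt G c x y) = tt G c x v + ∑ y ∈ univ.erase v, tt G c x y := by
    intro x
    rw [← Finset.add_sum_erase (univ : Finset V) (fun y => tt G c x y) (mem_univ v)]
  have h3 : (∑ x ∈ univ.erase v, tt G c x v) = same G c v := by
    have : (∑ x ∈ univ.erase v, tt G c x v) = ∑ x ∈ univ.erase v, tt G c v x := by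
      exact Finset.sum_congr rfl fun x _ => tt_symm G c x v
    rw [this]
    have h4 : same G c v = tt G c v v + ∑ x ∈ univ.erase v, tt G c v x := by
      unfold same
      rw [← Finset.add_sum_erase (univ : Finset V) (fun y => tt G c v y) (mem_univ v)]
    have h5 : tt G c v v = 0 := by unfold tt; simp [G.irrefl]
    rw [h4, h5, zero_add]
  calc Wt G c = same G c v + ∑ x ∈ univ.erase v, (tt G c x v + ∑ y ∈ univ.erase v, tt G c x y) := by
        rw [h1]; congr 1; exact Finset.sum_congr rfl fun x _ => h2 x
    _ = same G c v + ((∑ x ∈ univ.erase v, tt G c x v) +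
          ∑ x ∈ univ.erase v, ∑ y ∈ univ.erase v, tt G c x y) := by rw [Finset.sum_add_distrib]
    _ = 2 * same G c v + ∑ x ∈ univ.erase v, ∑ y ∈ univ.erase v, tt G c x y := by
        rw [h3]; ring

lemma Wt_flip (c : V → Bool) (v : V) :
    Wt G (Function.update c v (!c v)) + 2 * same G c v = Wt G c + 2 * diff G c v := by
  set c' := Function.update c v (!c v) with hc'
  have hsame' : same G c' v = diff G c v := by
    unfold same diff
    exact Finset.sum_congr rfl fun y _ => tt_flip G c v y
  have hR : (∑ x ∈ univ.erase v, ∑ y ∈ univ.erase v, tt G c' x y)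
      = ∑ x ∈ univ.erase v, ∑ y ∈ univ.erase v, tt G c x y := by
    refine Finset.sum_congr rfl fun x hx => Finset.sum_congr rfl fun y hy => ?_
    exact tt_flip_ne G c v x y (Finset.ne_of_mem_erase hx) (Finset.ne_of_mem_erase hy)
  rw [Wt_split G c v, Wt_split G c' v, hsame', hR]
  ring

/-- every finite graph has a 2-coloring where each vertex has at most half its
neighbors of its own color -/
lemma exists_maxcut : ∃ c : V → Bool, ∀ v, 2 * same G c v ≤ deg G v := by
  obtain ⟨c, -, hmin⟩ := Finset.exists_min_image (univ : Finset (V → Bool)) (Wt G)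
    ⟨fun _ => true, mem_univ _⟩
  refine ⟨c, fun v => ?_⟩
  have hflip := Wt_flip G c v
  have hle := hmin (Function.update c v (!c v)) (mem_univ _)
  have hsd : same G c v ≤ diff G c v := by omega
  have hsum : same G c v + diff G c v = deg G v := by
    unfold same diff tt deg
    rw [← Finset.sum_add_distrib]
    have : ∀ y : V, ((if G.Adj v y ∧ c v = c y then 1 else 0) +
        if G.Adj v y ∧ c y ≠ c v then (1:ℕ) else 0) = if G.Adj v y then 1 else 0 := by
      intro y
      by_cases h : G.Adj v y
      · by_cases h2 : c v = c y <;> simp [h, h2, Ne, eq_comm]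
      · simp [h]
    rw [Finset.sum_congr rfl fun y _ => this y]
    have : G.neighborSet v = ↑(univ.filter fun y => G.Adj v y) := by
      ext y; simp [SimpleGraph.neighborSet]
    rw [this, Set.ncard_coe_finset]
    have := Finset.natCast_card_filter (R := ℕ) (fun y => G.Adj v y) (univ : Finset V)
    simpa using this.symm
  omega

end MaxCut

lemma no_odd_cycle_of_colorable {V : Type*} (G : SimpleGraph V) (h : G.Colorable 2) :
    ∀ t : ℕ, Odd t → ¬ hasCycleLength G t := by
  obtain ⟨C⟩ := h
  set f : V → ZMod 2 := fun v => if C v = 0 then 0 else 1 with hf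
  have hadj : ∀ a b : V, G.Adj a b → f b = f a + 1 := by
    intro a b hab
    have hne : C a ≠ C b := C.valid hab
    have : ∀ x y : Fin 2, x ≠ y →
        (if y = 0 then (0:ZMod 2) else 1) = (if x = 0 then (0:ZMod 2) else 1) + 1 := by decide
    exact this _ _ hne
  have hwalk : ∀ (u v : V) (w : G.Walk u v), f v = f u + w.length := by
    intro u v w
    induction w with
    | nil => simp
    | cons hadj' q ih =>
      rename_i a b c'
      rw [SimpleGraph.Walk.length_cons]
      rw [ih, hadj _ _ hadj']
      push_cast
      ring
  rintro t ht ⟨v, w, -, hlen⟩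
  have := hwalk v v w
  rw [hlen] at this
  have ht0 : ((t : ℕ) : ZMod 2) = 0 := by
    have h := this
    nth_rewrite 1 [show f v = f v + 0 by rw [add_zero]] at h
    exact (add_left_cancel h).symm
  rw [ZMod.natCast_eq_zero_iff] at ht0
  exact (Nat.not_even_iff_odd.mpr ht) (even_iff_two_dvd.mpr ht0)

/-- Deterministic part: bounded max degree implies the structural conclusion. -/
lemma det_part {n : ℕ} (hn : 3 ≤ n) (ε : ℝ) (q : ℝ) (G : SimpleGraph (Fin n))
    (hdeg : ∀ v, (deg G v : ℝ) ≤ (1 + 2 * ε) * n * q) :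
    ∃ H : SimpleGraph (Fin n), H ≤ G ∧
      (∀ v, (deg H v : ℝ) ≤ (1 / 2 + ε) * n * q) ∧
      (G \ H).Colorable 2 ∧
      (∀ t : ℕ, Odd t → ¬ hasCycleLength (G \ H) t) ∧
      ¬ Pancyclic (G \ H) := by
  obtain ⟨c, hc⟩ := exists_maxcut G
  set H : SimpleGraph (Fin n) :=
    { Adj := fun x y => G.Adj x y ∧ c x = c y
      symm := ⟨by rintro x y ⟨h1, h2⟩; exact ⟨h1.symm, h2.symm⟩⟩
      loopless := ⟨by rintro x ⟨h1, -⟩; exact G.irrefl h1⟩ } with hH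
  have hHG : H ≤ G := fun x y h => h.1
  have hdegH : ∀ v, deg H v = same G c v := by
    intro v
    unfold deg same tt
    have : H.neighborSet v = ↑(univ.filter fun y => G.Adj v y ∧ c v = c y) := by
      ext y; simp [SimpleGraph.neighborSet, hH]
    rw [this, Set.ncard_coe_finset]
    have := Finset.natCast_card_filter (R := ℕ) (fun y => G.Adj v y ∧ c v = c y) (univ : Finset (Fin n))
    simpa using this
  have hcol : (G \ H).Colorable 2 := by
    have hC : ∀ {x y : Fin n}, (G \ H).Adj x y → c x ≠ c y := by
      intro x y hxy
      rw [SimpleGraph.sdiff_adj] at hxy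
      intro hcc
      exact hxy.2 ⟨hxy.1, hcc⟩
    have C : (G \ H).Coloring Bool := SimpleGraph.Coloring.mk c fun h => hC h
    simpa using C.colorable
  have hnoodd := no_odd_cycle_of_colorable _ hcol
  refine ⟨H, hHG, ?_, hcol, hnoodd, ?_⟩
  · intro v
    have h2 : 2 * deg H v ≤ deg G v := by rw [hdegH]; exact hc v
    have h2' : (2 : ℝ) * deg H v ≤ deg G v := by exact_mod_cast h2
    have := hdeg v
    nlinarith [this, h2']
  · intro hpan
    exact hnoodd 3 (by decide) (hpan 3 le_rfl hn)


/-- total mass of a powerset under binomial weights is 1 -/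
lemma mass_powerset {α : Type*} [DecidableEq α] (p : ℝ) (t : Finset α) :
    ∑ s ∈ t.powerset, p ^ s.card * (1 - p) ^ (t.card - s.card) = 1 := by
  rw [Finset.sum_powerset_apply_card (fun k => p ^ k * (1 - p) ^ (t.card - k))]
  have h2 : ∑ m ∈ Finset.range (t.card + 1), (t.card).choose m • (p ^ m * (1 - p) ^ (t.card - m))
      = ∑ m ∈ Finset.range (t.card + 1), p ^ m * (1 - p) ^ (t.card - m) * (t.card).choose m := by
    refine Finset.sum_congr rfl fun k _ => ?_
    rw [nsmul_eq_mul]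
    ring
  rw [h2, ← add_pow, add_sub_cancel, one_pow]

/-- the edge set of the complete graph on `Fin n` as a finset -/
def topE (n : ℕ) : Finset (Sym2 (Fin n)) := (⊤ : SimpleGraph (Fin n)).edgeFinset

lemma card_topE (n : ℕ) : (topE n).card = n.choose 2 := by
  rw [topE, SimpleGraph.card_edgeFinset_top_eq_card_choose_two, Fintype.card_fin]

lemma mem_topE_ne {n : ℕ} {x y : Fin n} (h : s(x, y) ∈ topE n) : x ≠ y := by
  rw [topE, SimpleGraph.mem_edgeFinset, SimpleGraph.mem_edgeSet] at h
  exact h.ne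

lemma edgeSet_fromEdgeSet_subset {n : ℕ} (s : Finset (Sym2 (Fin n))) (hs : s ∈ (topE n).powerset) :
    (SimpleGraph.fromEdgeSet (↑s : Set (Sym2 (Fin n)))).edgeSet = ↑s := by
  rw [Finset.mem_powerset] at hs
  rw [SimpleGraph.edgeSet_fromEdgeSet]
  ext e
  simp only [Set.mem_diff, Set.mem_setOf_eq, Finset.mem_coe, and_iff_left_iff_imp]
  intro he hd
  obtain ⟨x, y⟩ := e
  exact mem_topE_ne (hs he) (Sym2.mk_isDiag_iff.mp hd)

lemma erProb_eq_sum_powerset (n : ℕ) (p : ℝ) (A : SimpleGraph (Fin n) → Prop) :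
    erProb n p A = ∑ s ∈ (topE n).powerset,
      if A (SimpleGraph.fromEdgeSet (↑s : Set (Sym2 (Fin n)))) then
        p ^ s.card * (1 - p) ^ (n.choose 2 - s.card) else 0 := by
  rw [erProb, Finset.sum_filter]
  refine Finset.sum_nbij' (fun G => G.edgeFinset)
    (fun s => SimpleGraph.fromEdgeSet (↑s : Set (Sym2 (Fin n)))) ?_ ?_ ?_ ?_ ?_
  · intro G _
    rw [Finset.mem_powerset]
    exact SimpleGraph.edgeFinset_mono le_top
  · intro s _; exact Finset.mem_univ _
  · intro G _
    show SimpleGraph.fromEdgeSet (↑G.edgeFinset) = G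
    rw [SimpleGraph.coe_edgeFinset, SimpleGraph.fromEdgeSet_edgeSet]
  · intro s hs
    have h : (SimpleGraph.fromEdgeSet (↑s : Set (Sym2 (Fin n)))).edgeFinset = s := by
      ext e
      rw [SimpleGraph.mem_edgeFinset, edgeSet_fromEdgeSet_subset s hs]
      exact Finset.mem_coe
    convert h using 2 <;> exact Subsingleton.elim _ _
  · intro G _
    have hcard : G.edgeSet.ncard = G.edgeFinset.card := Set.ncard_eq_toFinset_card' _
    show _ = if A (SimpleGraph.fromEdgeSet (↑G.edgeFinset)) then
        p ^ G.edgeFinset.card * (1 - p) ^ (n.choose 2 - G.edgeFinset.card) else 0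
    rw [SimpleGraph.coe_edgeFinset, SimpleGraph.fromEdgeSet_edgeSet, hcard]

lemma erProb_true (n : ℕ) (p : ℝ) : erProb n p (fun _ => True) = 1 := by
  rw [erProb_eq_sum_powerset]
  simp only [if_true]
  rw [← card_topE n]
  exact mass_powerset p (topE n)

lemma erProb_nonneg (n : ℕ) (p : ℝ) (h0 : 0 ≤ p) (h1 : p ≤ 1) (A : SimpleGraph (Fin n) → Prop) :
    0 ≤ erProb n p A := by
  refine Finset.sum_nonneg fun G _ => ?_
  have : (0:ℝ) ≤ 1 - p := by linarith
  positivity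

lemma erProb_mono (n : ℕ) (p : ℝ) (h0 : 0 ≤ p) (h1 : p ≤ 1)
    {A B : SimpleGraph (Fin n) → Prop} (h : ∀ G, A G → B G) :
    erProb n p A ≤ erProb n p B := by
  refine Finset.sum_le_sum_of_subset_of_nonneg (fun G hG => ?_) fun G _ _ => ?_
  · rw [Finset.mem_filter] at hG ⊢
    exact ⟨hG.1, h G hG.2⟩
  have : (0:ℝ) ≤ 1 - p := by linarith
  positivity

lemma erProb_congr (n : ℕ) (p : ℝ) {A B : SimpleGraph (Fin n) → Prop} (h : ∀ G, A G ↔ B G) :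
    erProb n p A = erProb n p B := by
  unfold erProb
  congr 1
  exact Finset.filter_congr fun G _ => h G

lemma erProb_add_not (n : ℕ) (p : ℝ) (A : SimpleGraph (Fin n) → Prop) :
    erProb n p A + erProb n p (fun G => ¬ A G) = 1 := by
  rw [← erProb_true n p]
  unfold erProb
  rw [Finset.sum_filter, Finset.sum_filter, Finset.sum_filter, ← Finset.sum_add_distrib]
  refine Finset.sum_congr rfl fun G _ => ?_
  by_cases h : A G <;> simp [h]

lemma erProb_union_bound (n : ℕ) (p : ℝ) (h0 : 0 ≤ p) (h1 : p ≤ 1)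
    (B : Fin n → SimpleGraph (Fin n) → Prop) :
    erProb n p (fun G => ∃ v, B v G) ≤ ∑ v : Fin n, erProb n p (B v) := by
  have hw : ∀ G : SimpleGraph (Fin n),
      (0:ℝ) ≤ p ^ G.edgeSet.ncard * (1 - p) ^ (n.choose 2 - G.edgeSet.ncard) := by
    intro G
    have : (0:ℝ) ≤ 1 - p := by linarith
    positivity
  unfold erProb
  simp only [Finset.sum_filter]
  rw [Finset.sum_comm]
  refine Finset.sum_le_sum fun G _ => ?_
  by_cases h : ∃ v, B v G
  · obtain ⟨v0, hv0⟩ := h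
    rw [if_pos ⟨v0, hv0⟩]
    have := Finset.single_le_sum (f := fun v : Fin n =>
      if B v G then p ^ G.edgeSet.ncard * (1 - p) ^ (n.choose 2 - G.edgeSet.ncard) else 0)
      (fun v _ => by by_cases hb : B v G <;> simp [hb, hw G]) (Finset.mem_univ v0)
    simpa [hv0] using this
  · rw [if_neg h]
    refine Finset.sum_nonneg fun v _ => ?_
    by_cases hb : B v G <;> simp [hb, hw G]

lemma sum_powerset_union {α M : Type*} [DecidableEq α] [AddCommMonoid M]
    {a b : Finset α} (hab : Disjoint a b) (f : Finset α → M) :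
    ∑ s ∈ (a ∪ b).powerset, f s = ∑ u ∈ a.powerset, ∑ t ∈ b.powerset, f (u ∪ t) := by
  rw [← Finset.sum_product']
  refine Finset.sum_nbij' (i := fun s => (s ∩ a, s ∩ b)) (j := fun q => q.1 ∪ q.2)
    ?_ ?_ ?_ ?_ ?_
  · intro s hs
    rw [Finset.mem_powerset] at hs
    rw [Finset.mem_product, Finset.mem_powerset, Finset.mem_powerset]
    exact ⟨Finset.inter_subset_right, Finset.inter_subset_right⟩
  · intro q hq
    rw [Finset.mem_product, Finset.mem_powerset, Finset.mem_powerset] at hq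
    rw [Finset.mem_powerset]
    exact Finset.union_subset_union hq.1 hq.2
  · intro s hs
    rw [Finset.mem_powerset] at hs
    show (s ∩ a) ∪ (s ∩ b) = s
    rw [← Finset.inter_union_distrib_left]
    exact Finset.inter_eq_left.mpr hs
  · intro q hq
    rw [Finset.mem_product, Finset.mem_powerset, Finset.mem_powerset] at hq
    show ((q.1 ∪ q.2) ∩ a, (q.1 ∪ q.2) ∩ b) = q
    have h1 : (q.1 ∪ q.2) ∩ a = q.1 := by
      rw [Finset.union_inter_distrib_right, Finset.inter_eq_left.mpr hq.1,
        Finset.disjoint_iff_inter_eq_empty.mp (hab.symm.mono_left hq.2), Finset.union_empty]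
    have h2 : (q.1 ∪ q.2) ∩ b = q.2 := by
      rw [Finset.union_inter_distrib_right, Finset.inter_eq_left.mpr hq.2,
        Finset.disjoint_iff_inter_eq_empty.mp (hab.mono_left hq.1), Finset.empty_union]
    rw [h1, h2]
  · intro s hs
    rw [Finset.mem_powerset] at hs
    show f s = f ((s ∩ a) ∪ (s ∩ b))
    rw [← Finset.inter_union_distrib_left, Finset.inter_eq_left.mpr hs]

lemma deg_fromEdgeSet {n : ℕ} (v : Fin n) (s : Finset (Sym2 (Fin n)))
    (hs : s ∈ (topE n).powerset) :
    deg (SimpleGraph.fromEdgeSet (↑s : Set (Sym2 (Fin n)))) v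
      = (s.filter fun e => v ∈ e).card := by
  rw [Finset.mem_powerset] at hs
  unfold deg
  have hset : (SimpleGraph.fromEdgeSet (↑s : Set (Sym2 (Fin n)))).neighborSet v
      = ↑(Finset.univ.filter fun w => s(v, w) ∈ s ∧ v ≠ w) := by
    ext w
    simp [SimpleGraph.fromEdgeSet_adj, SimpleGraph.neighborSet]
  rw [hset, Set.ncard_coe_finset]
  refine Finset.card_bij (fun w _ => s(v, w)) ?_ ?_ ?_
  · intro w hw
    rw [Finset.mem_filter] at hw ⊢
    exact ⟨hw.2.1, Sym2.mem_mk_left v w⟩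
  · intro w1 hw1 w2 hw2 heq
    exact Sym2.congr_right.mp heq
  · intro e he
    rw [Finset.mem_filter] at he
    obtain ⟨he1, he2⟩ := he
    refine ⟨Sym2.Mem.other he2, ?_, Sym2.other_spec he2⟩
    rw [Finset.mem_filter]
    refine ⟨Finset.mem_univ _, ?_, ?_⟩
    · rw [Sym2.other_spec he2]; exact he1
    · have := mem_topE_ne (n := n) (x := v) (y := Sym2.Mem.other he2) ?_
      · exact this
      · rw [Sym2.other_spec he2]; exact hs he1

lemma erProb_deg_tail (n : ℕ) (p : ℝ) (v : Fin n) (Q : ℕ → Prop) :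
    erProb n p (fun G => Q (deg G v)) =
      ∑ j ∈ Finset.range ((n - 1) + 1),
        if Q j then ((n - 1).choose j : ℝ) * (p ^ j * (1 - p) ^ ((n - 1) - j)) else 0 := by
  classical
  rw [erProb_eq_sum_powerset]
  set Sv := (topE n).filter (fun e => v ∈ e) with hSv
  set Tv := (topE n).filter (fun e => ¬ v ∈ e) with hTv
  have hU : Sv ∪ Tv = topE n := Finset.filter_union_filter_not_eq _ _
  have hdisj : Disjoint Sv Tv := Finset.disjoint_filter_filter_not _ _ _
  have hScard : Sv.card = n - 1 := by
    have h1 : SimpleGraph.fromEdgeSet (↑(topE n) : Set (Sym2 (Fin n)))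
        = (⊤ : SimpleGraph (Fin n)) := by
      unfold topE
      rw [SimpleGraph.coe_edgeFinset, SimpleGraph.fromEdgeSet_edgeSet]
    have h2 := deg_fromEdgeSet v (topE n) (Finset.mem_powerset_self _)
    rw [h1] at h2
    have h3 : (⊤ : SimpleGraph (Fin n)).neighborSet v = ↑(Finset.univ.erase v) := by
      ext w
      simp [SimpleGraph.neighborSet, eq_comm]
    rw [hSv, ← h2]
    unfold deg
    rw [h3, Set.ncard_coe_finset, Finset.card_erase_of_mem (Finset.mem_univ v),
      Finset.card_univ, Fintype.card_fin]
  have hMcard : Sv.card + Tv.card = n.choose 2 := by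
    rw [Finset.card_filter_add_card_filter_not, card_topE]
  -- rewrite the sum over the powerset of `topE n` as a double sum
  rw [← hU, sum_powerset_union hdisj]
  have hstep : ∀ u ∈ Sv.powerset, ∀ t ∈ Tv.powerset,
      (if Q (deg (SimpleGraph.fromEdgeSet (↑(u ∪ t) : Set (Sym2 (Fin n)))) v) then
        p ^ (u ∪ t).card * (1 - p) ^ (n.choose 2 - (u ∪ t).card) else 0)
      = (if Q u.card then p ^ u.card * (1 - p) ^ ((n - 1) - u.card) else 0)
        * (p ^ t.card * (1 - p) ^ (Tv.card - t.card)) := by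
    intro u hu t ht
    rw [Finset.mem_powerset] at hu ht
    have hut : Disjoint u t := hdisj.mono hu ht
    have hutsub : u ∪ t ∈ (topE n).powerset := by
      rw [Finset.mem_powerset, ← hU]
      exact Finset.union_subset_union hu ht
    have hdeg : deg (SimpleGraph.fromEdgeSet (↑(u ∪ t) : Set (Sym2 (Fin n)))) v = u.card := by
      rw [deg_fromEdgeSet v _ hutsub]
      congr 1
      rw [Finset.filter_union]
      have h1 : u.filter (fun e => v ∈ e) = u := by
        refine Finset.filter_true_of_mem fun e heu => ?_
        have := hu heu
        rw [hSv, Finset.mem_filter] at this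
        exact this.2
      have h2 : t.filter (fun e => v ∈ e) = ∅ := by
        refine Finset.filter_false_of_mem fun e het => ?_
        have := ht het
        rw [hTv, Finset.mem_filter] at this
        exact this.2
      rw [h1, h2, Finset.union_empty]
    have hcard : (u ∪ t).card = u.card + t.card := Finset.card_union_of_disjoint hut
    have hu_le : u.card ≤ n - 1 := hScard ▸ Finset.card_le_card hu
    have ht_le : t.card ≤ Tv.card := Finset.card_le_card ht
    have hexp : n.choose 2 - (u.card + t.card)
        = ((n - 1) - u.card) + (Tv.card - t.card) := by omega
    rw [hdeg, hcard, hexp, pow_add, pow_add]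
    by_cases hQ : Q u.card
    · rw [if_pos hQ, if_pos hQ]; ring
    · rw [if_neg hQ, if_neg hQ, zero_mul]
  rw [Finset.sum_congr rfl fun u hu => Finset.sum_congr rfl fun t ht => hstep u hu t ht]
  have hinner : ∀ u ∈ Sv.powerset,
      (∑ t ∈ Tv.powerset, (if Q u.card then p ^ u.card * (1 - p) ^ ((n - 1) - u.card) else 0)
        * (p ^ t.card * (1 - p) ^ (Tv.card - t.card)))
      = (if Q u.card then p ^ u.card * (1 - p) ^ ((n - 1) - u.card) else 0) := by
    intro u _
    rw [← Finset.mul_sum, mass_powerset p Tv, mul_one]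
  rw [Finset.sum_congr rfl hinner]
  have := Finset.sum_powerset_apply_card
    (fun k => if Q k then p ^ k * (1 - p) ^ ((n - 1) - k) else 0) (x := Sv)
  rw [this, hScard]
  refine Finset.sum_congr rfl fun j _ => ?_
  by_cases hQ : Q j
  · rw [if_pos hQ, if_pos hQ, nsmul_eq_mul]
  · rw [if_neg hQ, if_neg hQ, smul_zero]

lemma chernoff_tail (m : ℕ) (p a lam : ℝ) (h0 : 0 ≤ p) (h1 : p ≤ 1) (hlam : 0 ≤ lam)
    (ha : 0 ≤ a) :
    (∑ j ∈ Finset.range (m + 1),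
      if a < (j : ℝ) then (m.choose j : ℝ) * (p ^ j * (1 - p) ^ (m - j)) else 0)
      ≤ Real.exp (-(lam * a)) * (p * Real.exp lam + (1 - p)) ^ m := by
  have hq : (0:ℝ) ≤ 1 - p := by linarith
  rw [add_pow (p * Real.exp lam) (1 - p) m, Finset.mul_sum]
  refine Finset.sum_le_sum fun j hj => ?_
  have hpe : (0:ℝ) ≤ (p * Real.exp lam) ^ j := pow_nonneg (mul_nonneg h0 (Real.exp_pos _).le) _
  have hqj : (0:ℝ) ≤ (1 - p) ^ (m - j) := pow_nonneg hq _
  have hch : (0:ℝ) ≤ (m.choose j : ℝ) := Nat.cast_nonneg _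
  by_cases hc : a < (j:ℝ)
  · rw [if_pos hc]
    have e1 : (p * Real.exp lam) ^ j = p ^ j * Real.exp (lam * (j:ℕ)) := by
      rw [mul_pow, mul_comm lam, Real.exp_nat_mul]
    have key : (1:ℝ) ≤ Real.exp (-(lam * a)) * Real.exp (lam * (j:ℕ)) := by
      rw [← Real.exp_add]
      have h2 : (0:ℝ) ≤ -(lam * a) + lam * (j:ℕ) := by nlinarith [hc.le]
      calc (1:ℝ) = Real.exp 0 := Real.exp_zero.symm
        _ ≤ _ := Real.exp_le_exp.mpr h2
    have hX : (0:ℝ) ≤ (m.choose j : ℝ) * (p ^ j * (1 - p) ^ (m - j)) := by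
      have := pow_nonneg h0 j
      positivity
    calc (m.choose j : ℝ) * (p ^ j * (1 - p) ^ (m - j))
        = 1 * ((m.choose j : ℝ) * (p ^ j * (1 - p) ^ (m - j))) := (one_mul _).symm
      _ ≤ (Real.exp (-(lam * a)) * Real.exp (lam * (j:ℕ)))
            * ((m.choose j : ℝ) * (p ^ j * (1 - p) ^ (m - j))) :=
          mul_le_mul_of_nonneg_right key hX
      _ = Real.exp (-(lam * a)) * ((p ^ j * Real.exp (lam * (j:ℕ))) * (1 - p) ^ (m - j)
            * (m.choose j : ℝ)) := by ring
      _ = Real.exp (-(lam * a)) * ((p * Real.exp lam) ^ j * (1 - p) ^ (m - j)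
            * (m.choose j : ℝ)) := by rw [e1]
  · rw [if_neg hc]
    have : (0:ℝ) ≤ (p * Real.exp lam) ^ j * (1 - p) ^ (m - j) * (m.choose j : ℝ) := by
      exact mul_nonneg (mul_nonneg hpe hqj) hch
    exact mul_nonneg (Real.exp_pos _).le this

lemma vertex_bad_bound (n : ℕ) (p ε : ℝ) (h0 : 0 ≤ p) (h1 : p ≤ 1) (hε : 0 < ε) (v : Fin n) :
    erProb n p (fun G => (1 + 2 * ε) * n * p < (deg G v : ℝ))
      ≤ Real.exp (-(((1 + 2 * ε) * Real.log (1 + 2 * ε) - 2 * ε) * ((n:ℝ) * p))) := by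
  have h2ε : (1:ℝ) < 1 + 2 * ε := by linarith
  set lam := Real.log (1 + 2 * ε) with hlamdef
  set a := (1 + 2 * ε) * (n:ℝ) * p with hadef
  have hlam : 0 ≤ lam := Real.log_nonneg h2ε.le
  have hexplam : Real.exp lam = 1 + 2 * ε := Real.exp_log (by linarith)
  have ha : 0 ≤ a := by
    have : (0:ℝ) ≤ (n:ℝ) := Nat.cast_nonneg _
    have h3 : (0:ℝ) ≤ 1 + 2 * ε := by linarith
    positivity
  rw [erProb_deg_tail n p v (fun k => a < (k:ℝ))]
  have step1 := chernoff_tail (n - 1) p a lam h0 h1 hlam ha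
  refine le_trans step1 ?_
  have hbase : p * Real.exp lam + (1 - p) = 1 + 2 * ε * p := by
    rw [hexplam]; ring
  rw [hbase]
  have hb1 : (0:ℝ) ≤ 1 + 2 * ε * p := by nlinarith
  have hb2 : 1 + 2 * ε * p ≤ Real.exp (2 * ε * p) := by
    have := Real.add_one_le_exp (2 * ε * p)
    linarith
  have hpow : (1 + 2 * ε * p) ^ (n - 1) ≤ Real.exp (2 * ε * p) ^ (n - 1) :=
    pow_le_pow_left₀ hb1 hb2 _
  calc Real.exp (-(lam * a)) * (1 + 2 * ε * p) ^ (n - 1)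
      ≤ Real.exp (-(lam * a)) * Real.exp (2 * ε * p) ^ (n - 1) := by
        exact mul_le_mul_of_nonneg_left hpow (Real.exp_pos _).le
    _ = Real.exp (-(lam * a) + 2 * ε * p * ((n - 1 : ℕ):ℝ)) := by
        rw [← Real.exp_nat_mul, ← Real.exp_add]
        ring_nf
    _ ≤ Real.exp (-(((1 + 2 * ε) * lam - 2 * ε) * ((n:ℝ) * p))) := by
        rw [Real.exp_le_exp]
        have hcast : ((n - 1 : ℕ):ℝ) ≤ (n:ℝ) := by
          exact_mod_cast Nat.cast_le.mpr (Nat.sub_le n 1)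
        have hεp : (0:ℝ) ≤ 2 * ε * p := by positivity
        have h5 : 2 * ε * p * ((n - 1 : ℕ):ℝ) ≤ 2 * ε * p * (n:ℝ) :=
          mul_le_mul_of_nonneg_left hcast hεp
        rw [hadef]
        nlinarith [h5]

lemma c_pos (ε : ℝ) (hε : 0 < ε) : 0 < (1 + 2 * ε) * Real.log (1 + 2 * ε) - 2 * ε := by
  have hx : (0:ℝ) < 1 + 2 * ε := by linarith
  set y := 2 * ε / (1 + 2 * ε) with hy
  have hy0 : 0 < y := by positivity
  have h2 : 1 - y < Real.exp (-y) := by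
    have := Real.add_one_lt_exp (x := -y) (by linarith : -y ≠ 0)
    linarith
  have h3 : (1:ℝ) - y = 1 / (1 + 2 * ε) := by
    rw [hy]
    field_simp
    ring
  have h4 : Real.exp y < 1 + 2 * ε := by
    have h2' : 1 / (1 + 2 * ε) < 1 / Real.exp y := by
      rw [Real.exp_neg, ← one_div] at h2
      rw [← h3]
      exact h2
    exact lt_of_one_div_lt_one_div hx h2'
  have h5 : y < Real.log (1 + 2 * ε) := (Real.lt_log_iff_exp_lt hx).mpr h4
  have h6 : 2 * ε < Real.log (1 + 2 * ε) * (1 + 2 * ε) := (div_lt_iff₀ hx).mp h5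
  linarith

lemma bad_bound (n : ℕ) (p ε : ℝ) (h0 : 0 ≤ p) (h1 : p ≤ 1) (hε : 0 < ε) :
    erProb n p (fun G => ∃ v : Fin n, (1 + 2 * ε) * n * p < (deg G v : ℝ))
      ≤ n * Real.exp (-(((1 + 2 * ε) * Real.log (1 + 2 * ε) - 2 * ε) * ((n:ℝ) * p))) := by
  refine le_trans (erProb_union_bound n p h0 h1 _) ?_
  calc (∑ v : Fin n, erProb n p (fun G => (1 + 2 * ε) * n * p < (deg G v : ℝ)))
      ≤ ∑ _v : Fin n,
          Real.exp (-(((1 + 2 * ε) * Real.log (1 + 2 * ε) - 2 * ε) * ((n:ℝ) * p))) :=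
        Finset.sum_le_sum fun v _ => vertex_bad_bound n p ε h0 h1 hε v
    _ = n * Real.exp (-(((1 + 2 * ε) * Real.log (1 + 2 * ε) - 2 * ε) * ((n:ℝ) * p))) := by
        rw [Finset.sum_const, Finset.card_univ, Fintype.card_fin, nsmul_eq_mul]

lemma tendsto_n_exp (C : ℝ) (hC : 0 < C) (p : ℕ → ℝ)
    (h1 : Tendsto (fun n : ℕ => (n : ℝ) * p n / Real.log n) atTop atTop) :
    Tendsto (fun n : ℕ => (n:ℝ) * Real.exp (-(C * ((n:ℝ) * p n)))) atTop (nhds 0) := by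
  have hlog : Tendsto (fun n : ℕ => Real.log n) atTop atTop :=
    Real.tendsto_log_atTop.comp tendsto_natCast_atTop_atTop
  have hneg : Tendsto (fun n : ℕ => -Real.log n) atTop atBot :=
    tendsto_neg_atTop_atBot.comp hlog
  have hg : Tendsto (fun n : ℕ => Real.log n - C * ((n:ℝ) * p n)) atTop atBot := by
    refine tendsto_atBot_mono' atTop ?_ hneg
    have hev1 : ∀ᶠ n : ℕ in atTop, (2 / C) ≤ (n:ℝ) * p n / Real.log n :=
      h1.eventually_ge_atTop _
    have hev2 : ∀ᶠ n : ℕ in atTop, (1:ℝ) ≤ Real.log n := hlog.eventually_ge_atTop _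
    filter_upwards [hev1, hev2] with n hn1 hn2
    have hlogpos : (0:ℝ) < Real.log n := by linarith
    have h3 : (2 / C) * Real.log n ≤ (n:ℝ) * p n := by
      rw [le_div_iff₀ hlogpos] at hn1
      exact hn1
    have h4 : 2 * Real.log n ≤ C * ((n:ℝ) * p n) := by
      have := mul_le_mul_of_nonneg_left h3 hC.le
      calc 2 * Real.log n = C * ((2 / C) * Real.log n) := by field_simp
        _ ≤ C * ((n:ℝ) * p n) := this
    linarith
  have hexp : Tendsto (fun n : ℕ => Real.exp (Real.log n - C * ((n:ℝ) * p n))) atTop (nhds 0) :=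
    Real.tendsto_exp_atBot.comp hg
  refine hexp.congr' ?_
  filter_upwards [Filter.eventually_ge_atTop 1] with n hn
  have hnpos : (0:ℝ) < (n:ℝ) := by exact_mod_cast hn
  rw [sub_eq_add_neg, Real.exp_add, Real.exp_log hnpos]

set_option maxHeartbeats 1000000 in
/-- Fix `ε > 0`. If `p(n)` satisfies `np(n)/log n → ∞`, then a.a.s. `G(n,p)` contains a
subgraph `H` with `Δ(H) ≤ (1/2 + ε)np` such that `G − H` is bipartite (in particular `G − H`
contains no odd cycle, so `G − H` is not pancyclic). -/
theorem stmt_17 (ε : ℝ) (hε : 0 < ε) (p : ℕ → ℝ)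
    (hp : ∀ n, 0 ≤ p n ∧ p n ≤ 1)
    (h1 : Tendsto (fun n : ℕ => (n : ℝ) * p n / Real.log n) atTop atTop) :
    Tendsto (fun n : ℕ => erProb n (p n) fun G =>
        ∃ H : SimpleGraph (Fin n), H ≤ G ∧
          (∀ v, (deg H v : ℝ) ≤ (1 / 2 + ε) * n * p n) ∧
          (G \ H).Colorable 2 ∧
          (∀ t : ℕ, Odd t → ¬ hasCycleLength (G \ H) t) ∧
          ¬ Pancyclic (G \ H))
      atTop (nhds 1) := by
  have hCpos := c_pos ε hε
  set C := (1 + 2 * ε) * Real.log (1 + 2 * ε) - 2 * ε with hCdef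
  have hbad0 : Tendsto (fun n : ℕ => erProb n (p n)
      (fun G => ∃ v : Fin n, (1 + 2 * ε) * n * p n < (deg G v : ℝ))) atTop (nhds 0) := by
    refine squeeze_zero (fun n => erProb_nonneg n (p n) (hp n).1 (hp n).2 _)
      (fun n => bad_bound n (p n) ε (hp n).1 (hp n).2 hε) (tendsto_n_exp C hCpos p h1)
  refine tendsto_of_tendsto_of_tendsto_of_le_of_le'
    (g := fun n : ℕ => 1 - erProb n (p n)
      (fun G => ∃ v : Fin n, (1 + 2 * ε) * n * p n < (deg G v : ℝ)))
    (h := fun _ : ℕ => (1:ℝ)) ?_ tendsto_const_nhds ?_ ?_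
  · simpa using tendsto_const_nhds.sub hbad0
  · filter_upwards [Filter.eventually_ge_atTop 3] with n hn
    have hsplit := erProb_add_not n (p n)
      (fun G => ∃ v : Fin n, (1 + 2 * ε) * n * p n < (deg G v : ℝ))
    have hmono : erProb n (p n)
        (fun G => ¬ ∃ v : Fin n, (1 + 2 * ε) * n * p n < (deg G v : ℝ))
        ≤ erProb n (p n) (fun G =>
          ∃ H : SimpleGraph (Fin n), H ≤ G ∧
            (∀ v, (deg H v : ℝ) ≤ (1 / 2 + ε) * n * p n) ∧
            (G \ H).Colorable 2 ∧
            (∀ t : ℕ, Odd t → ¬ hasCycleLength (G \ H) t) ∧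
            ¬ Pancyclic (G \ H)) := by
      refine erProb_mono n (p n) (hp n).1 (hp n).2 fun G hG => ?_
      push_neg at hG
      exact det_part hn ε (p n) G hG
    linarith
  · filter_upwards with n
    calc erProb n (p n) _ ≤ erProb n (p n) (fun _ => True) :=
          erProb_mono n (p n) (hp n).1 (hp n).2 fun G _ => trivial
      _ = 1 := erProb_true n (p n)
end
end
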